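/- arXiv:1712.08276 — 11 statements merged into one kernel-verified Lean document; each statement's English description precedes it below -/
import Mathlib

section
/- In a skew monoidal category equipped with a natural isomorphism s : (XA)B → (XB)A satisfying the braiding axiom (S3a) (compatibility of s with the associator in the form: a ∘ s ∘ (s⊗1) = s ∘ a⊗1, i.e. the composite ((XA)B)C →^{s1} ((XB)A)C →^{s} ((XB)C)A →^{a1} (X(BC))A equals ((XA)B)C →^{a} (XA)(BC) →^{s} (X(BC))A), the composite (WB)A →^{r} ((WB)A)I →^{s} ((WB)I)A →^{a1} (W(BI))A is equal to (1r)1 : (WB)A → (W(BI))A. -/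
open CategoryTheory

universe v u

/-- A (left) skew monoidal category: tensor, unit, and structure maps
`a : (XY)Z ⟶ X(YZ)`, `ℓ : IX ⟶ X`, `r : X ⟶ XI` satisfying the five
coherence conditions of Szlachányi (none required to be invertible). -/
structure SkewMonoidalStruct (C : Type u) [Category.{v} C] where
  tensor : C → C → C
  tensorHom : ∀ {X X' Y Y' : C}, (X ⟶ X') → (Y ⟶ Y') → (tensor X Y ⟶ tensor X' Y')
  tensorHom_id : ∀ (X Y : C), tensorHom (𝟙 X) (𝟙 Y) = 𝟙 (tensor X Y)
  tensorHom_comp : ∀ {X X' X'' Y Y' Y'' : C} (f : X ⟶ X') (f' : X' ⟶ X'')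
      (g : Y ⟶ Y') (g' : Y' ⟶ Y''),
      tensorHom (f ≫ f') (g ≫ g') = tensorHom f g ≫ tensorHom f' g'
  unit : C
  assoc : ∀ X Y Z : C, tensor (tensor X Y) Z ⟶ tensor X (tensor Y Z)
  lunit : ∀ X : C, tensor unit X ⟶ X
  runit : ∀ X : C, X ⟶ tensor X unit
  assoc_natural : ∀ {X X' Y Y' Z Z' : C} (f : X ⟶ X') (g : Y ⟶ Y') (h : Z ⟶ Z'),
      tensorHom (tensorHom f g) h ≫ assoc X' Y' Z' =
        assoc X Y Z ≫ tensorHom f (tensorHom g h)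
  lunit_natural : ∀ {X X' : C} (f : X ⟶ X'),
      tensorHom (𝟙 unit) f ≫ lunit X' = lunit X ≫ f
  runit_natural : ∀ {X X' : C} (f : X ⟶ X'),
      runit X ≫ tensorHom f (𝟙 unit) = f ≫ runit X'
  pentagon : ∀ W X Y Z : C,
      tensorHom (assoc W X Y) (𝟙 Z) ≫ assoc W (tensor X Y) Z ≫
        tensorHom (𝟙 W) (assoc X Y Z) =
      assoc (tensor W X) Y Z ≫ assoc W X (tensor Y Z)
  lunit_assoc : ∀ X Y : C,
      assoc unit X Y ≫ lunit (tensor X Y) = tensorHom (lunit X) (𝟙 Y)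
  runit_assoc : ∀ X Y : C,
      runit (tensor X Y) ≫ assoc X Y unit = tensorHom (𝟙 X) (runit Y)
  middle_unit : ∀ X Y : C,
      tensorHom (runit X) (𝟙 Y) ≫ assoc X unit Y ≫ tensorHom (𝟙 X) (lunit Y) =
        𝟙 (tensor X Y)
  lunit_runit : runit unit ≫ lunit unit = 𝟙 unit

namespace SkewMonoidalStruct

variable {C : Type u} [Category.{v} C] (M : SkewMonoidalStruct C)

/-- Naturality (in all three variables) for a family `s : (XA)B ⟶ (XB)A`. -/
def SNatural (s : ∀ X A B : C, M.tensor (M.tensor X A) B ⟶ M.tensor (M.tensor X B) A) : Prop :=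
  ∀ {X X' A A' B B' : C} (f : X ⟶ X') (g : A ⟶ A') (h : B ⟶ B'),
    M.tensorHom (M.tensorHom f g) h ≫ s X' A' B' =
      s X A B ≫ M.tensorHom (M.tensorHom f h) g

/-- Axiom (S2), the Yang–Baxter-type hexagon. -/
def S2 (s : ∀ X A B : C, M.tensor (M.tensor X A) B ⟶ M.tensor (M.tensor X B) A) : Prop :=
  ∀ X A B Cc : C,
    s (M.tensor X A) B Cc ≫ M.tensorHom (s X A Cc) (𝟙 B) ≫ s (M.tensor X Cc) A B =
      M.tensorHom (s X A B) (𝟙 Cc) ≫ s (M.tensor X B) A Cc ≫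
        M.tensorHom (s X B Cc) (𝟙 A)

/-- Axiom (S3a): the composite `((XA)B)C →^{s1} ((XB)A)C →^{s} ((XB)C)A →^{a1} (X(BC))A`
equals `((XA)B)C →^{a} (XA)(BC) →^{s} (X(BC))A`. -/
def S3a (s : ∀ X A B : C, M.tensor (M.tensor X A) B ⟶ M.tensor (M.tensor X B) A) : Prop :=
  ∀ X A B Cc : C,
    M.tensorHom (s X A B) (𝟙 Cc) ≫ s (M.tensor X B) A Cc ≫
        M.tensorHom (M.assoc X B Cc) (𝟙 A) =
      M.assoc (M.tensor X A) B Cc ≫ s X A (M.tensor B Cc)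

/-- Axiom (S3b): the composite `((XA)B)C →^{s} ((XA)C)B →^{s1} ((XC)A)B →^{a} (XC)(AB)`
equals `((XA)B)C →^{a1} (X(AB))C →^{s} (XC)(AB)`. -/
def S3b (s : ∀ X A B : C, M.tensor (M.tensor X A) B ⟶ M.tensor (M.tensor X B) A) : Prop :=
  ∀ X A B Cc : C,
    s (M.tensor X A) B Cc ≫ M.tensorHom (s X A Cc) (𝟙 B) ≫
        M.assoc (M.tensor X Cc) A B =
      M.tensorHom (M.assoc X A B) (𝟙 Cc) ≫ s X (M.tensor A B) Cc

/-- Axiom (S*). -/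
def Sstar (s : ∀ X A B : C, M.tensor (M.tensor X A) B ⟶ M.tensor (M.tensor X B) A) : Prop :=
  ∀ X A B Cc : C,
    M.tensorHom (M.assoc X A B) (𝟙 Cc) ≫ M.assoc X (M.tensor A B) Cc ≫
        M.tensorHom (𝟙 X) (s A B Cc) =
      s (M.tensor X A) B Cc ≫ M.tensorHom (M.assoc X A Cc) (𝟙 B) ≫
        M.assoc X (M.tensor A Cc) B

end SkewMonoidalStruct

namespace SkewMonoidalStruct

variable {C : Type u} [Category.{v} C] {M : SkewMonoidalStruct C}
  {s : ∀ X A B : C, M.tensor (M.tensor X A) B ⟶ M.tensor (M.tensor X B) A}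

/- (S3a) applies only behind `s ⊗ 1`; precomposing with `s` produces it, via naturality of `r`. -/
theorem s_comp_runit_comp_s_comp_assoc (hnat : M.SNatural s) (h3a : M.S3a s) (W B A : C) :
    s W A B ≫ M.runit (M.tensor (M.tensor W B) A) ≫ s (M.tensor W B) A M.unit ≫
        M.tensorHom (M.assoc W B M.unit) (𝟙 A) =
      s W A B ≫ M.tensorHom (M.tensorHom (𝟙 W) (M.runit B)) (𝟙 A) :=
  calc _ = M.runit (M.tensor (M.tensor W A) B) ≫ M.tensorHom (s W A B) (𝟙 M.unit) ≫
          s (M.tensor W B) A M.unit ≫ M.tensorHom (M.assoc W B M.unit) (𝟙 A) := by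
        rw [← reassoc_of% (M.runit_natural (s W A B))]
    _ = M.runit (M.tensor (M.tensor W A) B) ≫ M.assoc (M.tensor W A) B M.unit ≫
          s W A (M.tensor B M.unit) := by
        rw [h3a]
    _ = M.tensorHom (M.tensorHom (𝟙 W) (𝟙 A)) (M.runit B) ≫ s W A (M.tensor B M.unit) := by
        rw [reassoc_of% (M.runit_assoc (M.tensor W A) B), M.tensorHom_id]
    _ = _ := hnat (𝟙 W) (𝟙 A) (M.runit B)

end SkewMonoidalStruct

/-- Lemma: consequence of (S3a).
In a skew monoidal category with a natural isomorphism `s : (XA)B ⟶ (XB)A`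
satisfying (S3a), the composite
`(WB)A →^{r} ((WB)A)I →^{s} ((WB)I)A →^{a1} (W(BI))A` equals `(1r)1`. -/
theorem stmt0 {C : Type u} [Category.{v} C] (M : SkewMonoidalStruct C)
    (s : ∀ X A B : C, M.tensor (M.tensor X A) B ⟶ M.tensor (M.tensor X B) A)
    (hiso : ∀ X A B : C, IsIso (s X A B))
    (hnat : M.SNatural s) (h3a : M.S3a s) :
    ∀ W B A : C,
      M.runit (M.tensor (M.tensor W B) A) ≫ s (M.tensor W B) A M.unit ≫
          M.tensorHom (M.assoc W B M.unit) (𝟙 A) =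
        M.tensorHom (M.tensorHom (𝟙 W) (M.runit B)) (𝟙 A) := fun W B A =>
  (cancel_epi (s W A B)).1 (M.s_comp_runit_comp_s_comp_assoc hnat h3a W B A)
end

section
/- In a skew monoidal category with a natural isomorphism s : (XA)B → (XB)A satisfying braiding axiom (S3a), the triangle WA →^{r} (WA)I →^{s} (WI)A equals r⊗1 : WA → (WI)A. -/
/-!
Instantiating (S3a) at `C = I` and using `r_{XA ⊗ B} ≫ a = 1 ⊗ r_B` shows, after cancelling the
invertible `s_{X,A,B}`, that `r ≫ s ≫ (a ⊗ 1) = (1 ⊗ r_B) ⊗ 1`. Taking `X = W`, `B = I` and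
postcomposing with `(1 ⊗ ℓ_I) ⊗ 1`, the axiom `r_I ≫ ℓ_I = 1` makes `r ≫ s` a section of
`θ ⊗ 1`, where `θ = runitRetraction W = a ≫ (1 ⊗ ℓ_I)` is a retraction of `r_W ⊗ 1` by the
middle unit axiom.
Naturality of `r` and `s` along `r_W` then yields `r ≫ s = r_W ⊗ 1`.
-/


open CategoryTheory

universe v u

namespace SkewMonoidalStruct

variable {C : Type u} [Category.{v} C] (M : SkewMonoidalStruct C)
  {s : ∀ X A B : C, M.tensor (M.tensor X A) B ⟶ M.tensor (M.tensor X B) A}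

def runitRetraction (W : C) : M.tensor (M.tensor W M.unit) M.unit ⟶ M.tensor W M.unit :=
  M.assoc W M.unit M.unit ≫ M.tensorHom (𝟙 W) (M.lunit M.unit)

theorem tensorHom_runit_comp_runitRetraction (W : C) :
    M.tensorHom (M.runit W) (𝟙 M.unit) ≫ M.runitRetraction W = 𝟙 (M.tensor W M.unit) := by
  rw [runitRetraction, ← M.middle_unit W M.unit]

theorem runit_comp_s_comp_assoc (hnat : M.SNatural s) (h3a : M.S3a s) (X A B : C)
    [Epi (s X A B)] :
    M.runit (M.tensor (M.tensor X B) A) ≫ s (M.tensor X B) A M.unit ≫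
        M.tensorHom (M.assoc X B M.unit) (𝟙 A) =
      M.tensorHom (M.tensorHom (𝟙 X) (M.runit B)) (𝟙 A) := by
  rw [← cancel_epi (s X A B)]
  calc s X A B ≫ M.runit (M.tensor (M.tensor X B) A) ≫ s (M.tensor X B) A M.unit ≫
          M.tensorHom (M.assoc X B M.unit) (𝟙 A)
      = M.runit (M.tensor (M.tensor X A) B) ≫ M.tensorHom (s X A B) (𝟙 M.unit) ≫
          s (M.tensor X B) A M.unit ≫ M.tensorHom (M.assoc X B M.unit) (𝟙 A) := by
        rw [← Category.assoc, ← M.runit_natural, Category.assoc]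
    _ = M.runit (M.tensor (M.tensor X A) B) ≫ M.assoc (M.tensor X A) B M.unit ≫
          s X A (M.tensor B M.unit) := by
        rw [h3a]
    _ = M.tensorHom (M.tensorHom (𝟙 X) (𝟙 A)) (M.runit B) ≫ s X A (M.tensor B M.unit) := by
        rw [← Category.assoc, M.runit_assoc, M.tensorHom_id]
    _ = s X A B ≫ M.tensorHom (M.tensorHom (𝟙 X) (M.runit B)) (𝟙 A) := hnat _ _ _

theorem runit_comp_s_comp_runitRetraction (hnat : M.SNatural s) (h3a : M.S3a s) (W A : C)
    [Epi (s W A M.unit)] :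
    M.runit (M.tensor (M.tensor W M.unit) A) ≫ s (M.tensor W M.unit) A M.unit ≫
        M.tensorHom (M.runitRetraction W) (𝟙 A) =
      𝟙 (M.tensor (M.tensor W M.unit) A) := by
  rw [runitRetraction, ← Category.comp_id (𝟙 A), M.tensorHom_comp, ← Category.assoc,
    ← Category.assoc, Category.assoc _ (s _ _ _), M.runit_comp_s_comp_assoc hnat h3a,
    ← M.tensorHom_comp, ← M.tensorHom_comp, M.lunit_runit, Category.comp_id, Category.comp_id,
    M.tensorHom_id, M.tensorHom_id]

theorem s_unit_eq_conj (hnat : M.SNatural s) (W A : C) :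
    s W A M.unit =
      M.tensorHom (M.tensorHom (M.runit W) (𝟙 A)) (𝟙 M.unit) ≫
        s (M.tensor W M.unit) A M.unit ≫ M.tensorHom (M.runitRetraction W) (𝟙 A) := by
  rw [← Category.assoc, hnat, Category.assoc, ← M.tensorHom_comp,
    M.tensorHom_runit_comp_runitRetraction, Category.comp_id, M.tensorHom_id, Category.comp_id]

end SkewMonoidalStruct

/-- Proposition: consequence of (S3a).
In a skew monoidal category with a natural isomorphism `s : (XA)B ⟶ (XB)A`
satisfying (S3a), the triangle `WA →^{r} (WA)I →^{s} (WI)A` equals `r ⊗ 1`. -/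
theorem stmt1 {C : Type u} [Category.{v} C] (M : SkewMonoidalStruct C)
    (s : ∀ X A B : C, M.tensor (M.tensor X A) B ⟶ M.tensor (M.tensor X B) A)
    (hiso : ∀ X A B : C, IsIso (s X A B))
    (hnat : M.SNatural s) (h3a : M.S3a s) :
    ∀ W A : C,
      M.runit (M.tensor W A) ≫ s W A M.unit =
        M.tensorHom (M.runit W) (𝟙 A) := by
  intro W A
  have := hiso W A M.unit
  calc M.runit (M.tensor W A) ≫ s W A M.unit
      = M.runit (M.tensor W A) ≫ M.tensorHom (M.tensorHom (M.runit W) (𝟙 A)) (𝟙 M.unit) ≫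
          s (M.tensor W M.unit) A M.unit ≫ M.tensorHom (M.runitRetraction W) (𝟙 A) := by
        rw [M.s_unit_eq_conj hnat]
    _ = M.tensorHom (M.runit W) (𝟙 A) ≫ M.runit (M.tensor (M.tensor W M.unit) A) ≫
          s (M.tensor W M.unit) A M.unit ≫ M.tensorHom (M.runitRetraction W) (𝟙 A) := by
        rw [← Category.assoc, M.runit_natural, Category.assoc]
    _ = M.tensorHom (M.runit W) (𝟙 A) := by
        rw [M.runit_comp_s_comp_runitRetraction hnat h3a, Category.comp_id]
end

section
/- In a skew monoidal category with a natural isomorphism s : (XA)B → (XB)A satisfying braiding axiom (S3a), the composite XA →^{r} (XA)I →^{s} (XI)A →^{a} X(IA) →^{1ℓ} XA is the identity. -/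
open CategoryTheory

universe v u

/-! By (S3a) with `C = I`, cancelling the isomorphism `s`, the map `r_{(XB)A} ≫ s ≫ (a ⊗ 1)`
equals `(1 ⊗ r_B) ⊗ 1`. At `B = I` the unit axiom `r_I ≫ ℓ_I = 1` turns this into a retraction of
`(r_X ⊗ 1) ⊗ 1`, and together with the middle unit axiom it yields `r_{XA} ≫ s_{X,A,I} = r_X ⊗ 1_A`.
The claimed composite is then the middle unit axiom for `X, A`. -/

namespace SkewMonoidalStruct

variable {C : Type u} [Category.{v} C] (M : SkewMonoidalStruct C)

theorem tensorHom_comp_id {X X' X'' : C} (f : X ⟶ X') (g : X' ⟶ X'') (Y : C) :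
    M.tensorHom (f ≫ g) (𝟙 Y) = M.tensorHom f (𝟙 Y) ≫ M.tensorHom g (𝟙 Y) := by
  rw [← M.tensorHom_comp, Category.comp_id]

theorem id_tensorHom_comp (X : C) {Y Y' Y'' : C} (f : Y ⟶ Y') (g : Y' ⟶ Y'') :
    M.tensorHom (𝟙 X) (f ≫ g) = M.tensorHom (𝟙 X) f ≫ M.tensorHom (𝟙 X) g := by
  rw [← M.tensorHom_comp, Category.comp_id]

variable {M} {s : ∀ X A B : C, M.tensor (M.tensor X A) B ⟶ M.tensor (M.tensor X B) A}

theorem runit_comp_s_comp_assoc_tensorHom (hiso : ∀ X A B : C, IsIso (s X A B))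
    (hnat : M.SNatural s) (h3a : M.S3a s) (X A B : C) :
    M.runit (M.tensor (M.tensor X B) A) ≫ s (M.tensor X B) A M.unit ≫
        M.tensorHom (M.assoc X B M.unit) (𝟙 A) =
      M.tensorHom (M.tensorHom (𝟙 X) (M.runit B)) (𝟙 A) := by
  rw [← cancel_epi (s X A B)]
  calc s X A B ≫ M.runit (M.tensor (M.tensor X B) A) ≫ s (M.tensor X B) A M.unit ≫
        M.tensorHom (M.assoc X B M.unit) (𝟙 A)
      = M.runit (M.tensor (M.tensor X A) B) ≫ M.tensorHom (s X A B) (𝟙 M.unit) ≫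
          s (M.tensor X B) A M.unit ≫ M.tensorHom (M.assoc X B M.unit) (𝟙 A) := by
        rw [← Category.assoc, ← M.runit_natural, Category.assoc]
    _ = (M.runit (M.tensor (M.tensor X A) B) ≫ M.assoc (M.tensor X A) B M.unit) ≫
          s X A (M.tensor B M.unit) := by
        rw [h3a, Category.assoc]
    _ = M.tensorHom (M.tensorHom (𝟙 X) (𝟙 A)) (M.runit B) ≫ s X A (M.tensor B M.unit) := by
        rw [M.runit_assoc, M.tensorHom_id]
    _ = s X A B ≫ M.tensorHom (M.tensorHom (𝟙 X) (M.runit B)) (𝟙 A) := hnat _ _ _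

theorem runit_comp_s_unit (hiso : ∀ X A B : C, IsIso (s X A B))
    (hnat : M.SNatural s) (h3a : M.S3a s) (X A : C) :
    M.runit (M.tensor X A) ≫ s X A M.unit = M.tensorHom (M.runit X) (𝟙 A) := by
  set φ := M.assoc X M.unit M.unit ≫ M.tensorHom (𝟙 X) (M.lunit M.unit)
  have hφ : M.tensorHom (M.runit X) (𝟙 M.unit) ≫ φ = 𝟙 _ := M.middle_unit X M.unit
  have retraction :
      M.runit (M.tensor (M.tensor X M.unit) A) ≫ s (M.tensor X M.unit) A M.unit ≫
        M.tensorHom φ (𝟙 A) = 𝟙 _ := by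
    rw [M.tensorHom_comp_id, reassoc_of% runit_comp_s_comp_assoc_tensorHom hiso hnat h3a X A,
      ← M.tensorHom_comp_id, ← M.id_tensorHom_comp, M.lunit_runit, M.tensorHom_id, M.tensorHom_id]
  calc M.runit (M.tensor X A) ≫ s X A M.unit
      = M.runit (M.tensor X A) ≫ s X A M.unit ≫
          M.tensorHom (M.tensorHom (M.runit X) (𝟙 M.unit) ≫ φ) (𝟙 A) := by
        rw [hφ, M.tensorHom_id, Category.comp_id]
    _ = M.tensorHom (M.runit X) (𝟙 A) ≫ M.runit (M.tensor (M.tensor X M.unit) A) ≫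
          s (M.tensor X M.unit) A M.unit ≫ M.tensorHom φ (𝟙 A) := by
        rw [M.tensorHom_comp_id, ← reassoc_of% hnat (M.runit X) (𝟙 A) (𝟙 M.unit),
          ← reassoc_of% M.runit_natural]
    _ = M.tensorHom (M.runit X) (𝟙 A) := by
        rw [retraction, Category.comp_id]

end SkewMonoidalStruct

/-- Proposition: consequence of (S3a).
In a skew monoidal category with a natural isomorphism `s` satisfying (S3a),
the composite `XA →^{r} (XA)I →^{s} (XI)A →^{a} X(IA) →^{1ℓ} XA` is the identity. -/
theorem stmt2 {C : Type u} [Category.{v} C] (M : SkewMonoidalStruct C)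
    (s : ∀ X A B : C, M.tensor (M.tensor X A) B ⟶ M.tensor (M.tensor X B) A)
    (hiso : ∀ X A B : C, IsIso (s X A B))
    (hnat : M.SNatural s) (h3a : M.S3a s) :
    ∀ X A : C,
      M.runit (M.tensor X A) ≫ s X A M.unit ≫ M.assoc X M.unit A ≫
          M.tensorHom (𝟙 X) (M.lunit A) =
        𝟙 (M.tensor X A) := by
  intro X A
  rw [reassoc_of% M.runit_comp_s_unit hiso hnat h3a X A, M.middle_unit]
end

section
/- In a skew monoidal category with a natural isomorphism s : (XA)B → (XB)A satisfying braiding axiom (S3a), the square commutes: (XA)B →^{r⊗1} ((XA)I)B →^{a} (XA)(IB) →^{s} (X(IB))A equals (XA)B →^{s} (XB)A →^{(r1)1} ((XI)B)A →^{a⊗1} (X(IB))A. -/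
open CategoryTheory

universe v u

/-!
Naturality of `s` moves `(r_X ⊗ 1) ⊗ 1` in front of `s` on the right-hand side, and (S3a) with
`C = I` turns the left-hand side into `((r_{XA} ≫ s_{X,A,I}) ⊗ 1) ≫ s ≫ (a ⊗ 1)`; so everything
reduces to `r_{XA} ≫ s_{X,A,I} = r_X ⊗ 1`. By the middle unit axiom `r_X ⊗ 1_I` has the
retraction `e = a ≫ (1 ⊗ ℓ_I)`. Precomposing with the epimorphism `s_{X,A,I}` and using (S3a),
`r_{(XA)I} ≫ a = 1 ⊗ r_I` and `r_I ≫ ℓ_I = 1` shows that `r ≫ s ≫ (e ⊗ 1)` is the identity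
of `(XI)A`, and naturality of `r ≫ s` in `X` then identifies `r_{XA} ≫ s_{X,A,I}` with `r_X ⊗ 1`.
-/

namespace SkewMonoidalStruct

variable {C : Type u} [Category.{v} C] (M : SkewMonoidalStruct C)
  {s : ∀ X A B : C, M.tensor (M.tensor X A) B ⟶ M.tensor (M.tensor X B) A}

lemma tensorHom_id_comp_tensorHom_id {X X' X'' Y : C} (f : X ⟶ X') (g : X' ⟶ X'') :
    M.tensorHom f (𝟙 Y) ≫ M.tensorHom g (𝟙 Y) = M.tensorHom (f ≫ g) (𝟙 Y) := by
  rw [← M.tensorHom_comp, Category.comp_id]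

lemma runit_comp_s_comp_assoc_lunit (hnat : M.SNatural s) (h3a : M.S3a s) (X A : C)
    [Epi (s X A M.unit)] :
    M.runit (M.tensor (M.tensor X M.unit) A) ≫ s (M.tensor X M.unit) A M.unit ≫
        M.tensorHom (M.assoc X M.unit M.unit ≫ M.tensorHom (𝟙 X) (M.lunit M.unit)) (𝟙 A) =
      𝟙 _ := by
  have hnat' := hnat (𝟙 X) (𝟙 A) (M.runit M.unit)
  rw [M.tensorHom_id] at hnat'
  rw [← cancel_epi (s X A M.unit), Category.comp_id, ← M.tensorHom_id_comp_tensorHom_id,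
    ← reassoc_of% (M.runit_natural (s X A M.unit)),
    reassoc_of% (h3a X A M.unit M.unit),
    reassoc_of% (M.runit_assoc (M.tensor X A) M.unit),
    reassoc_of% hnat',
    M.tensorHom_id_comp_tensorHom_id, ← M.tensorHom_comp, Category.comp_id, M.lunit_runit,
    M.tensorHom_id, M.tensorHom_id, Category.comp_id]

lemma runit_comp_s (hnat : M.SNatural s) (h3a : M.S3a s) (X A : C) [Epi (s X A M.unit)] :
    M.runit (M.tensor X A) ≫ s X A M.unit = M.tensorHom (M.runit X) (𝟙 A) := by
  have hnat' := hnat (M.runit X) (𝟙 A) (𝟙 M.unit)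
  calc M.runit (M.tensor X A) ≫ s X A M.unit
      = M.runit (M.tensor X A) ≫ s X A M.unit ≫
          M.tensorHom (M.tensorHom (M.runit X) (𝟙 M.unit) ≫ M.assoc X M.unit M.unit ≫
            M.tensorHom (𝟙 X) (M.lunit M.unit)) (𝟙 A) := by
        rw [M.middle_unit, M.tensorHom_id, Category.comp_id]
    _ = M.tensorHom (M.runit X) (𝟙 A) ≫ M.runit (M.tensor (M.tensor X M.unit) A) ≫
          s (M.tensor X M.unit) A M.unit ≫
            M.tensorHom (M.assoc X M.unit M.unit ≫ M.tensorHom (𝟙 X) (M.lunit M.unit)) (𝟙 A) := by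
        rw [← M.tensorHom_id_comp_tensorHom_id, ← reassoc_of% hnat',
          reassoc_of% (M.runit_natural (M.tensorHom (M.runit X) (𝟙 A)))]
    _ = M.tensorHom (M.runit X) (𝟙 A) := by
        rw [M.runit_comp_s_comp_assoc_lunit hnat h3a, Category.comp_id]

end SkewMonoidalStruct

/-- Proposition: consequence of (S3a).
`(XA)B →^{r⊗1} ((XA)I)B →^{a} (XA)(IB) →^{s} (X(IB))A` equals
`(XA)B →^{s} (XB)A →^{(r1)1} ((XI)B)A →^{a⊗1} (X(IB))A`. -/
theorem stmt3 {C : Type u} [Category.{v} C] (M : SkewMonoidalStruct C)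
    (s : ∀ X A B : C, M.tensor (M.tensor X A) B ⟶ M.tensor (M.tensor X B) A)
    (hiso : ∀ X A B : C, IsIso (s X A B))
    (hnat : M.SNatural s) (h3a : M.S3a s) :
    ∀ X A B : C,
      M.tensorHom (M.runit (M.tensor X A)) (𝟙 B) ≫
          M.assoc (M.tensor X A) M.unit B ≫ s X A (M.tensor M.unit B) =
        s X A B ≫ M.tensorHom (M.tensorHom (M.runit X) (𝟙 B)) (𝟙 A) ≫
          M.tensorHom (M.assoc X M.unit B) (𝟙 A) := by
  intro X A B
  have := hiso X A M.unit
  rw [← h3a, reassoc_of% M.tensorHom_id_comp_tensorHom_id, M.runit_comp_s hnat h3a,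
    reassoc_of% hnat]
end

section
/- If C is a braided skew monoidal category in which the left unit maps ℓ : IA → A are invertible (left normal), then the right unit maps r : A → AI and the associators a : (XY)Z → X(YZ) are also invertible; that is, C is a monoidal category. -/
open CategoryTheory

universe v u

/-!
Left normality makes `a_{I,A,B}` invertible, via `a_{I,A,B} ≫ ℓ_{AB} = ℓ_A ⊗ 1_B`. Axiom (S3b)
at `(W, B, C, A)` exhibits `a_{WA,B,C}` as an invertible map up to invertible factors whenever
`a_{W,B,C}` is invertible, so every `a_{IA,B,C}` is invertible, and naturality of `a` along the
isomorphism `ℓ_A : IA ≅ A` gives every `a_{A,B,C}`.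

For `r`, axiom (S3a) at `(I, A, B, I)` together with `r_{XY} ≫ a_{X,Y,I} = 1_X ⊗ r_Y` and
`a_{I,B,I} ≫ ℓ_{BI} = ℓ_B ⊗ 1_I` yields `r_{BA} ≫ s_{B,A,I} = r_B ⊗ 1_A`. At `B = I` and
with `r_I ≫ ℓ_I = 1_I`, this makes `r_A` a section of the isomorphism
`(ℓ_A⁻¹ ⊗ 1_I) ≫ s_{I,A,I} ≫ (ℓ_I ⊗ 1_A) ≫ ℓ_A`.
-/

namespace SkewMonoidalStruct

variable {C : Type u} [Category.{v} C] (M : SkewMonoidalStruct C)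

instance isIso_tensorHom {X X' Y Y' : C} (f : X ⟶ X') (g : Y ⟶ Y') [IsIso f] [IsIso g] :
    IsIso (M.tensorHom f g) :=
  ⟨⟨M.tensorHom (inv f) (inv g),
    by rw [← M.tensorHom_comp, IsIso.hom_inv_id, IsIso.hom_inv_id, M.tensorHom_id],
    by rw [← M.tensorHom_comp, IsIso.inv_hom_id, IsIso.inv_hom_id, M.tensorHom_id]⟩⟩

theorem isIso_assoc_unit (A B : C) [IsIso (M.lunit A)] [IsIso (M.lunit (M.tensor A B))] :
    IsIso (M.assoc M.unit A B) :=
  IsIso.of_isIso_fac_right (M.lunit_assoc A B)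

theorem isIso_assoc_of_isIso_assoc_unit_tensor (X Y Z : C) [IsIso (M.lunit X)]
    [IsIso (M.assoc (M.tensor M.unit X) Y Z)] : IsIso (M.assoc X Y Z) := by
  have h := M.assoc_natural (M.lunit X) (𝟙 Y) (𝟙 Z)
  rw [M.tensorHom_id] at h
  exact IsIso.of_isIso_fac_left h

variable (s : ∀ X A B : C, M.tensor (M.tensor X A) B ⟶ M.tensor (M.tensor X B) A)

theorem isIso_assoc_tensor (h3b : M.S3b s) (W X Y Z : C) [IsIso (s W Y X)]
    [IsIso (s (M.tensor W Y) Z X)] [IsIso (s W (M.tensor Y Z) X)] [IsIso (M.assoc W Y Z)] :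
    IsIso (M.assoc (M.tensor W X) Y Z) := by
  have : IsIso (M.tensorHom (s W Y X) (𝟙 Z) ≫ M.assoc (M.tensor W X) Y Z) :=
    IsIso.of_isIso_fac_left (h3b W Y Z X)
  exact IsIso.of_isIso_comp_left (M.tensorHom (s W Y X) (𝟙 Z)) _

theorem runit_comp_s_comp_tensorHom_assoc (hnat : M.SNatural s) (h3a : M.S3a s)
    (W A B : C) [IsIso (s W A B)] :
    M.runit (M.tensor (M.tensor W B) A) ≫ s (M.tensor W B) A M.unit ≫
        M.tensorHom (M.assoc W B M.unit) (𝟙 A) =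
      M.tensorHom (M.tensorHom (𝟙 W) (M.runit B)) (𝟙 A) := by
  apply (cancel_epi (s W A B)).1
  rw [reassoc_of% (M.runit_natural (s W A B)).symm, h3a,
    reassoc_of% (M.runit_assoc (M.tensor W A) B), ← M.tensorHom_id W A]
  exact hnat (𝟙 W) (𝟙 A) (M.runit B)

theorem runit_tensor_comp_s (hnat : M.SNatural s) (h3a : M.S3a s) (B A : C)
    [IsIso (s M.unit A B)] [IsIso (M.lunit B)] :
    M.runit (M.tensor B A) ≫ s B A M.unit = M.tensorHom (M.runit B) (𝟙 A) := by
  apply (cancel_epi (M.tensorHom (M.lunit B) (𝟙 A))).1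
  rw [reassoc_of% (M.runit_natural (M.tensorHom (M.lunit B) (𝟙 A))).symm,
    hnat (M.lunit B) (𝟙 A) (𝟙 M.unit), ← M.lunit_assoc B M.unit, M.tensorHom_comp_id,
    reassoc_of% (M.runit_comp_s_comp_tensorHom_assoc s hnat h3a M.unit A B),
    ← M.tensorHom_comp_id, M.lunit_natural, M.tensorHom_comp_id]

theorem isIso_runit (hnat : M.SNatural s) (h3a : M.S3a s) (X : C) [IsIso (s M.unit X M.unit)]
    [IsIso (M.lunit M.unit)] [IsIso (M.lunit X)] : IsIso (M.runit X) := by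
  have hretract : M.runit X ≫ (M.tensorHom (inv (M.lunit X)) (𝟙 M.unit) ≫
      s M.unit X M.unit ≫ M.tensorHom (M.lunit M.unit) (𝟙 X) ≫ M.lunit X) = 𝟙 X := by
    rw [reassoc_of% (M.runit_natural (inv (M.lunit X))),
      reassoc_of% (M.runit_tensor_comp_s s hnat h3a M.unit X),
      ← reassoc_of% (M.tensorHom_comp_id (M.runit M.unit) (M.lunit M.unit) X),
      M.lunit_runit, M.tensorHom_id, Category.id_comp, IsIso.inv_hom_id]
  exact IsIso.of_isIso_fac_right hretract

end SkewMonoidalStruct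

theorem stmt5_general {C : Type u} [Category.{v} C] (M : SkewMonoidalStruct C)
    (s : ∀ X A B : C, M.tensor (M.tensor X A) B ⟶ M.tensor (M.tensor X B) A)
    (hiso : ∀ X A B : C, IsIso (s X A B))
    (hnat : M.SNatural s)
    (h3a : M.S3a s) (h3b : M.S3b s)
    (hl : ∀ X : C, IsIso (M.lunit X)) :
    (∀ X : C, IsIso (M.runit X)) ∧ (∀ X Y Z : C, IsIso (M.assoc X Y Z)) := by
  refine ⟨fun X => M.isIso_runit s hnat h3a X, fun X Y Z => ?_⟩
  have := M.isIso_assoc_unit Y Z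
  have := M.isIso_assoc_tensor s h3b M.unit X Y Z
  exact M.isIso_assoc_of_isIso_assoc_unit_tensor X Y Z

/-- Proposition: left normal braided skew monoidal categories are monoidal.
If `C` is a braided skew monoidal category whose left unit maps are invertible,
then the right unit maps and the associators are also invertible, i.e. `C` is monoidal. -/
theorem stmt5 {C : Type u} [Category.{v} C] (M : SkewMonoidalStruct C)
    (s : ∀ X A B : C, M.tensor (M.tensor X A) B ⟶ M.tensor (M.tensor X B) A)
    (hiso : ∀ X A B : C, IsIso (s X A B))
    (hnat : M.SNatural s)
    (h2 : M.S2 s) (h3a : M.S3a s) (h3b : M.S3b s) (hstar : M.Sstar s)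
    (hl : ∀ X : C, IsIso (M.lunit X)) :
    (∀ X : C, IsIso (M.runit X)) ∧ (∀ X Y Z : C, IsIso (M.assoc X Y Z)) :=
  stmt5_general M s hiso hnat h3a h3b hl
end

section
/- Let C be a monoidal category. There is a bijection between braidings on C in the classical sense (natural isomorphisms c : BC → CB satisfying the two hexagon axioms) and braidings in the skew sense: natural isomorphisms s : (XA)B → (XB)A satisfying axioms (S2), (S3a), (S3b), and (S*). Under this bijection s is given by the composite (XB)C →^{a} X(BC) →^{1c} X(CB) →^{a⁻¹} (XC)B, and symmetries correspond to symmetries. -/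
/-!
A braiding `c` yields the skew braiding `s = a⁻¹ ∘ (1 ⊗ c) ∘ a`: then (S3a) and (S3b) are the two
hexagons, (S*) is coherence, and (S2) is the Yang–Baxter equation. Conversely, (S*) with `A = I`
and naturality of `s` in `X` (along `ρ`) show that every skew braiding has this form, with
`c_{A,B} = (λ ⊗ 1) ∘ s_{I,A,B} ∘ (λ⁻¹ ⊗ 1)`; the hexagons for `c` are (S3a) and (S3b) at `X = I`,
as `I ⊗ -` is faithful. Since `s ∘ s = a⁻¹ ∘ (1 ⊗ c ∘ c) ∘ a`, symmetries correspond to symmetries.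
-/

open CategoryTheory MonoidalCategory

universe v u

variable (C : Type u) [Category.{v} C] [MonoidalCategory C]

/-- A braiding on a monoidal category in the classical (Joyal–Street) sense:
a natural isomorphism `c : B ⊗ C ≅ C ⊗ B` satisfying the two hexagon axioms. -/
structure ClassicalBraiding where
  c : ∀ X Y : C, X ⊗ Y ≅ Y ⊗ X
  naturality : ∀ {X X' Y Y' : C} (f : X ⟶ X') (g : Y ⟶ Y'),
      (f ⊗ₘ g) ≫ (c X' Y').hom = (c X Y).hom ≫ (g ⊗ₘ f)
  hexagon_forward : ∀ X Y Z : C,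
      (α_ X Y Z).hom ≫ (c X (Y ⊗ Z)).hom ≫ (α_ Y Z X).hom =
        ((c X Y).hom ▷ Z) ≫ (α_ Y X Z).hom ≫ (Y ◁ (c X Z).hom)
  hexagon_reverse : ∀ X Y Z : C,
      (α_ X Y Z).inv ≫ (c (X ⊗ Y) Z).hom ≫ (α_ Z X Y).inv =
        (X ◁ (c Y Z).hom) ≫ (α_ X Z Y).inv ≫ ((c X Z).hom ▷ Y)

/-- A braiding on a monoidal category in the skew sense of Bourke–Lack:
a natural isomorphism `s : (XA)B ≅ (XB)A` satisfying axioms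
(S2), (S3a), (S3b) and (S*). -/
structure SkewBraiding where
  s : ∀ X A B : C, (X ⊗ A) ⊗ B ≅ (X ⊗ B) ⊗ A
  naturality : ∀ {X X' A A' B B' : C} (f : X ⟶ X') (g : A ⟶ A') (h : B ⟶ B'),
      ((f ⊗ₘ g) ⊗ₘ h) ≫ (s X' A' B').hom = (s X A B).hom ≫ ((f ⊗ₘ h) ⊗ₘ g)
  S2 : ∀ X A B Cc : C,
      (s (X ⊗ A) B Cc).hom ≫ ((s X A Cc).hom ▷ B) ≫ (s (X ⊗ Cc) A B).hom =
        ((s X A B).hom ▷ Cc) ≫ (s (X ⊗ B) A Cc).hom ≫ ((s X B Cc).hom ▷ A)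
  S3a : ∀ X A B Cc : C,
      ((s X A B).hom ▷ Cc) ≫ (s (X ⊗ B) A Cc).hom ≫ ((α_ X B Cc).hom ▷ A) =
        (α_ (X ⊗ A) B Cc).hom ≫ (s X A (B ⊗ Cc)).hom
  S3b : ∀ X A B Cc : C,
      (s (X ⊗ A) B Cc).hom ≫ ((s X A Cc).hom ▷ B) ≫ (α_ (X ⊗ Cc) A B).hom =
        ((α_ X A B).hom ▷ Cc) ≫ (s X (A ⊗ B) Cc).hom
  Sstar : ∀ X A B Cc : C,
      ((α_ X A B).hom ▷ Cc) ≫ (α_ X (A ⊗ B) Cc).hom ≫ (X ◁ (s A B Cc).hom) =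
        (s (X ⊗ A) B Cc).hom ≫ ((α_ X A Cc).hom ▷ B) ≫ (α_ X (A ⊗ Cc) B).hom


section

variable {C}

section Braided

open BraidedCategory

variable [BraidedCategory C]

def skewOfBraiding (X A B : C) : (X ⊗ A) ⊗ B ≅ (X ⊗ B) ⊗ A :=
  α_ X A B ≪≫ whiskerLeftIso X (β_ A B) ≪≫ (α_ X B A).symm

@[simp]
lemma skewOfBraiding_hom (X A B : C) :
    (skewOfBraiding X A B).hom = (α_ X A B).hom ≫ (X ◁ (β_ A B).hom) ≫ (α_ X B A).inv :=
  rfl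

lemma skewOfBraiding_naturality {X X' A A' B B' : C} (f : X ⟶ X') (g : A ⟶ A') (h : B ⟶ B') :
    ((f ⊗ₘ g) ⊗ₘ h) ≫ (skewOfBraiding X' A' B').hom =
      (skewOfBraiding X A B).hom ≫ ((f ⊗ₘ h) ⊗ₘ g) := by
  simp only [skewOfBraiding_hom, associator_naturality_assoc, tensorHom_def f (g ⊗ₘ h),
    Category.assoc, ← MonoidalCategory.whiskerLeft_comp_assoc, braiding_naturality]
  rw [MonoidalCategory.whiskerLeft_comp_assoc, ← whisker_exchange_assoc, ← tensorHom_def_assoc,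
    associator_inv_naturality]

lemma skewOfBraiding_S2 (X A B Cc : C) :
    (skewOfBraiding (X ⊗ A) B Cc).hom ≫ ((skewOfBraiding X A Cc).hom ▷ B) ≫
        (skewOfBraiding (X ⊗ Cc) A B).hom =
      ((skewOfBraiding X A B).hom ▷ Cc) ≫ (skewOfBraiding (X ⊗ B) A Cc).hom ≫
        ((skewOfBraiding X B Cc).hom ▷ A) :=
  calc _ = 𝟙 _ ⊗≫ X ◁ (A ◁ (β_ B Cc).hom ⊗≫ (β_ A Cc).hom ▷ B ⊗≫ Cc ◁ (β_ A B).hom) ⊗≫ 𝟙 _ := by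
        simp only [skewOfBraiding_hom]; monoidal
    _ = 𝟙 _ ⊗≫ X ◁ ((β_ A B).hom ▷ Cc ⊗≫ B ◁ (β_ A Cc).hom ⊗≫ (β_ B Cc).hom ▷ A) ⊗≫ 𝟙 _ := by
        rw [yang_baxter']; monoidal
    _ = _ := by simp only [skewOfBraiding_hom]; monoidal

lemma skewOfBraiding_S3a (X A B Cc : C) :
    ((skewOfBraiding X A B).hom ▷ Cc) ≫ (skewOfBraiding (X ⊗ B) A Cc).hom ≫
        ((α_ X B Cc).hom ▷ A) =
      (α_ (X ⊗ A) B Cc).hom ≫ (skewOfBraiding X A (B ⊗ Cc)).hom := by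
  simp only [skewOfBraiding_hom, braiding_tensor_right_hom]
  monoidal

lemma skewOfBraiding_S3b (X A B Cc : C) :
    (skewOfBraiding (X ⊗ A) B Cc).hom ≫ ((skewOfBraiding X A Cc).hom ▷ B) ≫
        (α_ (X ⊗ Cc) A B).hom =
      ((α_ X A B).hom ▷ Cc) ≫ (skewOfBraiding X (A ⊗ B) Cc).hom := by
  simp only [skewOfBraiding_hom, braiding_tensor_left_hom]
  monoidal

lemma skewOfBraiding_Sstar (X A B Cc : C) :
    ((α_ X A B).hom ▷ Cc) ≫ (α_ X (A ⊗ B) Cc).hom ≫ (X ◁ (skewOfBraiding A B Cc).hom) =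
      (skewOfBraiding (X ⊗ A) B Cc).hom ≫ ((α_ X A Cc).hom ▷ B) ≫
        (α_ X (A ⊗ Cc) B).hom := by
  simp only [skewOfBraiding_hom]
  monoidal

def SkewBraiding.ofBraidedCategory : SkewBraiding C where
  s := skewOfBraiding
  naturality := skewOfBraiding_naturality
  S2 := skewOfBraiding_S2
  S3a := skewOfBraiding_S3a
  S3b := skewOfBraiding_S3b
  Sstar := skewOfBraiding_Sstar

end Braided

lemma whiskerLeft_unit_injective {P Q : C} {f g : P ⟶ Q} (h : 𝟙_ C ◁ f = 𝟙_ C ◁ g) : f = g := by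
  simpa using h

namespace SkewBraiding

lemma ext {t t' : SkewBraiding C} (h : t.s = t'.s) : t = t' := by
  cases t; cases t'; cases h; rfl

variable (t : SkewBraiding C)

def unitBraiding (A B : C) : A ⊗ B ≅ B ⊗ A :=
  whiskerRightIso (λ_ A).symm B ≪≫ t.s (𝟙_ C) A B ≪≫ whiskerRightIso (λ_ B) A

lemma s_hom_eq (X A B : C) :
    (t.s X A B).hom = (α_ X A B).hom ≫ (X ◁ (t.unitBraiding A B).hom) ≫ (α_ X B A).inv := by
  have hnat : (t.s X A B).hom =
      ((ρ_ X).inv ▷ A ▷ B) ≫ (t.s (X ⊗ 𝟙_ C) A B).hom ≫ ((ρ_ X).hom ▷ B ▷ A) := by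
    have h := t.naturality (ρ_ X).inv (𝟙 A) (𝟙 B)
    simp only [tensorHom_id] at h
    rw [reassoc_of% h]
    simp [← comp_whiskerRight]
  have hstar : (t.s (X ⊗ 𝟙_ C) A B).hom = ((α_ X (𝟙_ C) A).hom ▷ B) ≫
      (α_ X (𝟙_ C ⊗ A) B).hom ≫ (X ◁ (t.s (𝟙_ C) A B).hom) ≫ (α_ X (𝟙_ C ⊗ B) A).inv ≫
        ((α_ X (𝟙_ C) B).inv ▷ A) := by
    simp [reassoc_of% t.Sstar X (𝟙_ C) A B]
  rw [hnat, hstar]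
  simp only [unitBraiding, Iso.trans_hom, whiskerRightIso_hom, Iso.symm_hom]
  monoidal

lemma unitBraiding_hexagon_forward (A B Cc : C) :
    (α_ A B Cc).hom ≫ (t.unitBraiding A (B ⊗ Cc)).hom ≫ (α_ B Cc A).hom =
      ((t.unitBraiding A B).hom ▷ Cc) ≫ (α_ B A Cc).hom ≫ (B ◁ (t.unitBraiding A Cc).hom) := by
  apply whiskerLeft_unit_injective
  calc _ = 𝟙 _ ⊗≫ ((α_ (𝟙_ C ⊗ A) B Cc).hom ≫ (t.s (𝟙_ C) A (B ⊗ Cc)).hom) ⊗≫ 𝟙 _ := by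
        simp only [s_hom_eq]; monoidal
    _ = 𝟙 _ ⊗≫ (((t.s (𝟙_ C) A B).hom ▷ Cc) ≫ (t.s (𝟙_ C ⊗ B) A Cc).hom ≫
          ((α_ (𝟙_ C) B Cc).hom ▷ A)) ⊗≫ 𝟙 _ := by rw [t.S3a]
    _ = _ := by simp only [s_hom_eq]; monoidal

lemma unitBraiding_hexagon_reverse (A B Cc : C) :
    (α_ A B Cc).inv ≫ (t.unitBraiding (A ⊗ B) Cc).hom ≫ (α_ Cc A B).inv =
      (A ◁ (t.unitBraiding B Cc).hom) ≫ (α_ A Cc B).inv ≫ ((t.unitBraiding A Cc).hom ▷ B) := by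
  apply whiskerLeft_unit_injective
  calc _ = 𝟙 _ ⊗≫ (((α_ (𝟙_ C) A B).hom ▷ Cc) ≫ (t.s (𝟙_ C) (A ⊗ B) Cc).hom) ⊗≫ 𝟙 _ := by
        simp only [s_hom_eq]; monoidal
    _ = 𝟙 _ ⊗≫ ((t.s (𝟙_ C ⊗ A) B Cc).hom ≫ ((t.s (𝟙_ C) A Cc).hom ▷ B) ≫
          (α_ (𝟙_ C ⊗ Cc) A B).hom) ⊗≫ 𝟙 _ := by rw [t.S3b]
    _ = _ := by simp only [s_hom_eq]; monoidal

lemma unitBraiding_naturality {X X' Y Y' : C} (f : X ⟶ X') (g : Y ⟶ Y') :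
    (f ⊗ₘ g) ≫ (t.unitBraiding X' Y').hom = (t.unitBraiding X Y).hom ≫ (g ⊗ₘ f) := by
  have hin : (f ⊗ₘ g) ≫ ((λ_ X').inv ▷ Y') = ((λ_ X).inv ▷ Y) ≫ ((𝟙 (𝟙_ C) ⊗ₘ f) ⊗ₘ g) := by
    simp [MonoidalCategory.tensorHom_def]
  have hout : ((𝟙 (𝟙_ C) ⊗ₘ g) ⊗ₘ f) ≫ ((λ_ Y').hom ▷ X') = ((λ_ Y).hom ▷ X) ≫ (g ⊗ₘ f) := by
    simp [MonoidalCategory.tensorHom_def]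
  simp only [unitBraiding, Iso.trans_hom, whiskerRightIso_hom, Iso.symm_hom, Category.assoc,
    reassoc_of% hin, reassoc_of% (t.naturality (𝟙 (𝟙_ C)) f g), hout]


def toClassicalBraiding : ClassicalBraiding C where
  c := t.unitBraiding
  naturality := t.unitBraiding_naturality
  hexagon_forward := t.unitBraiding_hexagon_forward
  hexagon_reverse := t.unitBraiding_hexagon_reverse

lemma s_hom_comp_s_hom (X A B : C) :
    (t.s X A B).hom ≫ (t.s X B A).hom =
      (α_ X A B).hom ≫ X ◁ ((t.unitBraiding A B).hom ≫ (t.unitBraiding B A).hom) ≫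
        (α_ X A B).inv := by
  simp [s_hom_eq]

lemma s_involutive_iff :
    (∀ X A B : C, (t.s X A B).hom ≫ (t.s X B A).hom = 𝟙 ((X ⊗ A) ⊗ B)) ↔
      ∀ A B : C, (t.unitBraiding A B).hom ≫ (t.unitBraiding B A).hom = 𝟙 (A ⊗ B) := by
  refine ⟨fun h A B => whiskerLeft_unit_injective ?_, fun h X A B => by simp [s_hom_comp_s_hom, h]⟩
  rw [← cancel_epi (α_ (𝟙_ C) A B).hom, ← cancel_mono (α_ (𝟙_ C) A B).inv]
  simp only [Category.assoc]
  rw [← s_hom_comp_s_hom, h]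
  simp

end SkewBraiding

namespace ClassicalBraiding

lemma ext {b b' : ClassicalBraiding C} (h : b.c = b'.c) : b = b' := by
  cases b; cases b'; cases h; rfl

variable (b : ClassicalBraiding C)

abbrev toBraidedCategory : BraidedCategory C where
  braiding := b.c
  braiding_naturality_right X _ _ f := by simpa using b.naturality (𝟙 X) f
  braiding_naturality_left f Z := by simpa using b.naturality f (𝟙 Z)
  hexagon_forward := b.hexagon_forward
  hexagon_reverse := b.hexagon_reverse

def toSkewBraiding : SkewBraiding C :=
  letI := b.toBraidedCategory
  SkewBraiding.ofBraidedCategory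

lemma toSkewBraiding_s_hom (X A B : C) :
    (b.toSkewBraiding.s X A B).hom = (α_ X A B).hom ≫ (X ◁ (b.c A B).hom) ≫ (α_ X B A).inv :=
  rfl

lemma unitBraiding_toSkewBraiding : b.toSkewBraiding.unitBraiding = b.c := by
  ext A B : 2
  apply Iso.ext
  simp only [SkewBraiding.unitBraiding, Iso.trans_hom, whiskerRightIso_hom, Iso.symm_hom,
    toSkewBraiding_s_hom]
  monoidal

end ClassicalBraiding

end

def classicalBraidingEquivSkewBraiding : ClassicalBraiding C ≃ SkewBraiding C where
  toFun := ClassicalBraiding.toSkewBraiding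
  invFun := SkewBraiding.toClassicalBraiding
  left_inv b := ClassicalBraiding.ext b.unitBraiding_toSkewBraiding
  right_inv t := SkewBraiding.ext <| funext₃ fun X A B => Iso.ext (t.s_hom_eq X A B).symm

/-- Proposition 2.3: for a monoidal category `C`, braidings in the
classical sense are in bijection with braidings in the skew sense; under the
bijection `s` is `(XB)C →^{a} X(BC) →^{1c} X(CB) →^{a⁻¹} (XC)B`, and symmetries
correspond to symmetries. -/
theorem stmt6 :
    ∃ E : ClassicalBraiding C ≃ SkewBraiding C,
      (∀ (b : ClassicalBraiding C) (X A B : C),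
        ((E b).s X A B).hom =
          (α_ X A B).hom ≫ (X ◁ (b.c A B).hom) ≫ (α_ X B A).inv) ∧
      (∀ b : ClassicalBraiding C,
        (∀ X Y : C, (b.c X Y).hom ≫ (b.c Y X).hom = 𝟙 (X ⊗ Y)) ↔
        (∀ X A B : C, ((E b).s X A B).hom ≫ ((E b).s X B A).hom = 𝟙 ((X ⊗ A) ⊗ B))) := by
  refine ⟨classicalBraidingEquivSkewBraiding C, fun b => b.toSkewBraiding_s_hom, fun b => ?_⟩
  rw [classicalBraidingEquivSkewBraiding, Equiv.coe_fn_mk, SkewBraiding.s_involutive_iff,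
    b.unitBraiding_toSkewBraiding]
end

section
/- In a skew closed category with a natural isomorphism s' : [B,[A,Y]] → [A,[B,Y]] satisfying axiom (S3') — the pentagon relating s' with L : [B,C] → [[A,B],[A,C]] — the triangle [I,[B,C]] →^{s'} [B,[I,C]] →^{[1,i]} [B,C] equals i : [I,[B,C]] → [B,C]. -/
open CategoryTheory

universe v u

/-- A skew closed category in the sense of Street: an internal hom `[−,−]`,
a unit `I`, and structure maps `L : [B,C] ⟶ [[A,B],[A,C]]`, `i : [I,A] ⟶ A`,
`j : I ⟶ [A,A]` satisfying Street's five coherence axioms. -/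
structure SkewClosedStruct (C : Type u) [Category.{v} C] where
  ihom : C → C → C
  ihomMap : ∀ {A' A B B' : C}, (A' ⟶ A) → (B ⟶ B') → (ihom A B ⟶ ihom A' B')
  ihomMap_id : ∀ A B : C, ihomMap (𝟙 A) (𝟙 B) = 𝟙 (ihom A B)
  ihomMap_comp : ∀ {A'' A' A B B' B'' : C}
      (f : A' ⟶ A) (f' : A'' ⟶ A') (g : B ⟶ B') (g' : B' ⟶ B''),
      ihomMap (f' ≫ f) (g ≫ g') = ihomMap f g ≫ ihomMap f' g'
  unit : C
  L : ∀ A B Cc : C, ihom B Cc ⟶ ihom (ihom A B) (ihom A Cc)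
  i : ∀ A : C, ihom unit A ⟶ A
  j : ∀ A : C, unit ⟶ ihom A A
  L_natural : ∀ {A B' B Cc Cc' : C} (f : B' ⟶ B) (g : Cc ⟶ Cc'),
      ihomMap f g ≫ L A B' Cc' =
        L A B Cc ≫ ihomMap (ihomMap (𝟙 A) f) (ihomMap (𝟙 A) g)
  L_dinatural : ∀ {A A' B Cc : C} (f : A' ⟶ A),
      L A B Cc ≫ ihomMap (𝟙 (ihom A B)) (ihomMap f (𝟙 Cc)) =
        L A' B Cc ≫ ihomMap (ihomMap f (𝟙 B)) (𝟙 (ihom A' Cc))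
  i_natural : ∀ {A A' : C} (f : A ⟶ A'),
      ihomMap (𝟙 unit) f ≫ i A' = i A ≫ f
  j_dinatural : ∀ {A A' : C} (f : A ⟶ A'),
      j A ≫ ihomMap (𝟙 A) f = j A' ≫ ihomMap f (𝟙 A')
  ax1 : ∀ A B : C,
      L A A B ≫ ihomMap (j A) (𝟙 (ihom A B)) ≫ i (ihom A B) = 𝟙 (ihom A B)
  ax2 : ∀ A B : C, j B ≫ L A B B = j (ihom A B)
  ax3 : ∀ A B Cc D : C,
      L A Cc D ≫ L (ihom A B) (ihom A Cc) (ihom A D) ≫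
          ihomMap (L A B Cc) (𝟙 (ihom (ihom A B) (ihom A D))) =
        L B Cc D ≫ ihomMap (𝟙 (ihom B Cc)) (L A B D)
  ax4 : ∀ B Cc : C,
      L unit B Cc ≫ ihomMap (𝟙 (ihom unit B)) (i Cc) = ihomMap (i B) (𝟙 Cc)
  ax5 : j unit ≫ i unit = 𝟙 unit

namespace SkewClosedStruct

variable {C : Type u} [Category.{v} C] (M : SkewClosedStruct C)

/-- Naturality (in all three variables) for a family
`s' : [B,[A,Y]] ⟶ [A,[B,Y]]`. -/
def S'Natural (s' : ∀ B A Y : C, M.ihom B (M.ihom A Y) ⟶ M.ihom A (M.ihom B Y)) : Prop :=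
  ∀ {B' B A' A Y Y' : C} (f : B' ⟶ B) (g : A' ⟶ A) (h : Y ⟶ Y'),
    M.ihomMap f (M.ihomMap g h) ≫ s' B' A' Y' =
      s' B A Y ≫ M.ihomMap g (M.ihomMap f h)

/-- Axiom (S3') of a braiding on a skew closed category: the pentagon
`[B,[A,Y]] →^{L} [[C,B],[C,[A,Y]]] →^{[1,s']} [[C,B],[A,[C,Y]]] →^{s'} [A,[[C,B],[C,Y]]]`
equals `[B,[A,Y]] →^{s'} [A,[B,Y]] →^{[1,L]} [A,[[C,B],[C,Y]]]`. -/
def S3' (s' : ∀ B A Y : C, M.ihom B (M.ihom A Y) ⟶ M.ihom A (M.ihom B Y)) : Prop :=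
  ∀ B A Y Cc : C,
    M.L Cc B (M.ihom A Y) ≫
        M.ihomMap (𝟙 (M.ihom Cc B)) (s' Cc A Y) ≫
        s' (M.ihom Cc B) A (M.ihom Cc Y) =
      s' B A Y ≫ M.ihomMap (𝟙 A) (M.L Cc B Y)

end SkewClosedStruct

/-!
By `ax1` and naturality of `i`, `g ↦ L ≫ [1, g]` has the retraction `k ↦ k ≫ [j, 1] ≫ i` on maps
out of `[I, X]`, so it suffices to show `L ≫ [1, s' ≫ [1, i]] = L ≫ [1, i]`, and the right side is
`[i, 1]` by `ax4`. After composing with the monomorphism `s'`, naturality of `s'` and (S3') turn the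
left side into `s' ≫ [1, L ≫ [1, i]]`, which `ax4` rewrites to `s' ≫ [1, [i, 1]] = [i, 1] ≫ s'`.
-/

namespace SkewClosedStruct

variable {C : Type u} [Category.{v} C] (M : SkewClosedStruct C)

lemma ihomMap_id_comp {A Y Y' Y'' : C} (h : Y ⟶ Y') (h' : Y' ⟶ Y'') :
    M.ihomMap (𝟙 A) (h ≫ h') = M.ihomMap (𝟙 A) h ≫ M.ihomMap (𝟙 A) h' := by
  rw [← M.ihomMap_comp, Category.comp_id]

lemma ihomMap_id_comp_ihomMap {A' A Y Y' : C} (g : A' ⟶ A) (h : Y ⟶ Y') :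
    M.ihomMap (𝟙 A) h ≫ M.ihomMap g (𝟙 Y') = M.ihomMap g h := by
  rw [← M.ihomMap_comp, Category.comp_id, Category.comp_id]

lemma ihomMap_comp_ihomMap_id {A' A Y Y' : C} (g : A' ⟶ A) (h : Y ⟶ Y') :
    M.ihomMap g (𝟙 Y) ≫ M.ihomMap (𝟙 A') h = M.ihomMap g h := by
  rw [← M.ihomMap_comp, Category.id_comp, Category.id_comp]

lemma L_comp_ihomMap_comp_ihomMap_j_comp_i {X Y : C} (g : M.ihom M.unit X ⟶ Y) :
    M.L M.unit M.unit X ≫ M.ihomMap (𝟙 _) g ≫ M.ihomMap (M.j M.unit) (𝟙 Y) ≫ M.i Y = g := by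
  rw [reassoc_of% M.ihomMap_id_comp_ihomMap, ← M.ihomMap_comp_ihomMap_id, Category.assoc,
    M.i_natural, reassoc_of% M.ax1]

lemma eq_of_L_comp_ihomMap_eq {X Y : C} {g g' : M.ihom M.unit X ⟶ Y}
    (h : M.L M.unit M.unit X ≫ M.ihomMap (𝟙 _) g = M.L M.unit M.unit X ≫ M.ihomMap (𝟙 _) g') :
    g = g' := by
  have h' := congrArg (· ≫ M.ihomMap (M.j M.unit) (𝟙 Y) ≫ M.i Y) h
  simpa only [Category.assoc, L_comp_ihomMap_comp_ihomMap_j_comp_i] using h'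

lemma L_comp_ihomMap_s'_comp_ihomMap_i
    (s' : ∀ B A Y : C, M.ihom B (M.ihom A Y) ⟶ M.ihom A (M.ihom B Y))
    (hnat : M.S'Natural s') (h3 : M.S3' s') (B Y : C)
    [Mono (s' (M.ihom M.unit M.unit) B Y)] :
    M.L M.unit M.unit (M.ihom B Y) ≫
        M.ihomMap (𝟙 _) (s' M.unit B Y ≫ M.ihomMap (𝟙 B) (M.i Y)) =
      M.ihomMap (M.i M.unit) (𝟙 (M.ihom B Y)) := by
  rw [← cancel_mono (s' (M.ihom M.unit M.unit) B Y)]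
  calc _ = (M.L M.unit M.unit (M.ihom B Y) ≫ M.ihomMap (𝟙 _) (s' M.unit B Y) ≫
          s' _ B (M.ihom M.unit Y)) ≫ M.ihomMap (𝟙 B) (M.ihomMap (𝟙 _) (M.i Y)) := by
        rw [M.ihomMap_id_comp, Category.assoc, Category.assoc, hnat (𝟙 _) (𝟙 B) (M.i Y)]
        simp only [Category.assoc]
    _ = s' M.unit B Y ≫ M.ihomMap (𝟙 B) (M.L M.unit M.unit Y ≫ M.ihomMap (𝟙 _) (M.i Y)) := by
        rw [h3, Category.assoc, M.ihomMap_id_comp]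
    _ = s' M.unit B Y ≫ M.ihomMap (𝟙 B) (M.ihomMap (M.i M.unit) (𝟙 Y)) := by
        rw [M.ax4]
    _ = _ := by
        rw [← hnat, M.ihomMap_id]

end SkewClosedStruct

/-- Proposition: unit compatibility is a consequence of (S3').
In a skew closed category with a natural isomorphism `s' : [B,[A,Y]] ⟶ [A,[B,Y]]`
satisfying (S3'), the triangle `[I,[B,C]] →^{s'} [B,[I,C]] →^{[1,i]} [B,C]`
equals `i`. -/
theorem stmt8 {C : Type u} [Category.{v} C] (M : SkewClosedStruct C)
    (s' : ∀ B A Y : C, M.ihom B (M.ihom A Y) ⟶ M.ihom A (M.ihom B Y))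
    (hiso : ∀ B A Y : C, IsIso (s' B A Y))
    (hnat : M.S'Natural s') (h3 : M.S3' s') :
    ∀ B Cc : C,
      s' M.unit B Cc ≫ M.ihomMap (𝟙 B) (M.i Cc) = M.i (M.ihom B Cc) := by
  intro B Cc
  have := hiso (M.ihom M.unit M.unit) B Cc
  apply M.eq_of_L_comp_ihomMap_eq
  rw [M.L_comp_ihomMap_s'_comp_ihomMap_i s' hnat h3, M.ax4]
end

section
/- Let C be a closed skew monoidal category, meaning each functor −⊗A has a right adjoint [A,−]. Then natural isomorphisms s : (XA)B → (XB)A are in bijection with natural isomorphisms s' : [A,[B,Y]] → [B,[A,Y]], via the requirement that the adjunction isomorphisms C((XA)B, Y) ≅ C(X,[A,[B,Y]]) intertwine C(s,1) with C(1,s'); moreover s satisfies the Yang–Baxter axiom (S2) if and only if s' satisfies the corresponding hexagon (S2') for iterated homs, and s is a symmetry (s∘s = id) if and only if s'∘s' = id. -/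
open CategoryTheory

universe v u

namespace SkewMonoidalStruct

variable {C : Type u} [Category.{v} C] (M : SkewMonoidalStruct C)

/-- Closed structure on a skew monoidal category: each `− ⊗ A` has a right
adjoint `[A,−]`, naturally in `A`. -/
structure Closed where
  ihom : C → C → C
  ihomMap : ∀ {A' A B B' : C}, (A' ⟶ A) → (B ⟶ B') → (ihom A B ⟶ ihom A' B')
  ihomMap_id : ∀ A B : C, ihomMap (𝟙 A) (𝟙 B) = 𝟙 (ihom A B)
  ihomMap_comp : ∀ {A'' A' A B B' B'' : C}
      (f : A' ⟶ A) (f' : A'' ⟶ A') (g : B ⟶ B') (g' : B' ⟶ B''),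
      ihomMap (f' ≫ f) (g ≫ g') = ihomMap f g ≫ ihomMap f' g'
  adj : ∀ (X A B : C), (M.tensor X A ⟶ B) ≃ (X ⟶ ihom A B)
  adj_natural_left : ∀ {X' X A B : C} (f : X' ⟶ X) (g : M.tensor X A ⟶ B),
      adj X' A B (M.tensorHom f (𝟙 A) ≫ g) = f ≫ adj X A B g
  adj_natural_right : ∀ {X A B B' : C} (g : M.tensor X A ⟶ B) (h : B ⟶ B'),
      adj X A B' (g ≫ h) = adj X A B g ≫ ihomMap (𝟙 A) h
  adj_natural_mid : ∀ {X A' A B : C} (u : A' ⟶ A) (g : M.tensor X A ⟶ B),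
      adj X A' B (M.tensorHom (𝟙 X) u ≫ g) = adj X A B g ≫ ihomMap u (𝟙 B)

variable (Cl : M.Closed)

/-- Naturality (in all three variables) of a family
`s' : [A,[B,Y]] ⟶ [B,[A,Y]]` for the closed structure `Cl`. -/
def S'Nat (s' : ∀ A B Y : C, Cl.ihom A (Cl.ihom B Y) ⟶ Cl.ihom B (Cl.ihom A Y)) : Prop :=
  ∀ {A' A B' B Y Y' : C} (f : A' ⟶ A) (g : B' ⟶ B) (h : Y ⟶ Y'),
    Cl.ihomMap f (Cl.ihomMap g h) ≫ s' A' B' Y' =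
      s' A B Y ≫ Cl.ihomMap g (Cl.ihomMap f h)

/-- Axiom (S2') for `s'`: the two composites
`[C,[B,[A,Y]]] ⟶ [A,[B,[C,Y]]]` built from three applications of `s'`/`[1,s']` agree. -/
def S2' (s' : ∀ A B Y : C, Cl.ihom A (Cl.ihom B Y) ⟶ Cl.ihom B (Cl.ihom A Y)) : Prop :=
  ∀ A B Cc Y : C,
    s' Cc B (Cl.ihom A Y) ≫ Cl.ihomMap (𝟙 B) (s' Cc A Y) ≫ s' B A (Cl.ihom Cc Y) =
      Cl.ihomMap (𝟙 Cc) (s' B A Y) ≫ s' Cc A (Cl.ihom B Y) ≫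
        Cl.ihomMap (𝟙 A) (s' Cc B Y)

/-- The "double adjunction" isomorphism `C((XA)B, Y) ≅ C(X, [A,[B,Y]])`. -/
def Φ (X A B Y : C) : (M.tensor (M.tensor X A) B ⟶ Y) ≃ (X ⟶ Cl.ihom A (Cl.ihom B Y)) :=
  (Cl.adj (M.tensor X A) B Y).trans (Cl.adj X A (Cl.ihom B Y))

end SkewMonoidalStruct

/-! By Yoneda, a family of maps out of the objects `(XA)B` is determined by what precomposition
with it does to hom-sets, and the double adjunction `Φ` turns hom-sets out of `(XA)B` into
hom-sets into `[A,[B,Y]]`. So `s` and `s'` correspond exactly when `Φ` conjugates `C(s,1)` into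
`C(1,s')`. Naturality of `Φ` in all four variables carries naturality across, and any equation
between composites of instances of `s` (invertibility, `s ∘ s = 1`, and, through the triple
adjunction, the Yang–Baxter equation (S2)) holds iff the mirror-image equation between composites
of instances of `s'` does. -/

theorem forall_eq_iff_forall_eq_of_homEquiv {C : Type u} [Category.{v} C] {L₁ L₂ R₁ R₂ : C → C}
    (Θ₁ : ∀ X Y, (L₁ X ⟶ Y) ≃ (X ⟶ R₁ Y)) (Θ₂ : ∀ X Y, (L₂ X ⟶ Y) ≃ (X ⟶ R₂ Y))
    {e₁ e₂ : ∀ X, L₁ X ⟶ L₂ X} {e₁' e₂' : ∀ Y, R₂ Y ⟶ R₁ Y}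
    (h₁ : ∀ X Y (g : L₂ X ⟶ Y), Θ₁ X Y (e₁ X ≫ g) = Θ₂ X Y g ≫ e₁' Y)
    (h₂ : ∀ X Y (g : L₂ X ⟶ Y), Θ₁ X Y (e₂ X ≫ g) = Θ₂ X Y g ≫ e₂' Y) :
    (∀ X, e₁ X = e₂ X) ↔ (∀ Y, e₁' Y = e₂' Y) := by
  constructor
  · intro h Y
    have h₁Y := h₁ _ Y ((Θ₂ _ Y).symm (𝟙 _))
    have h₂Y := h₂ _ Y ((Θ₂ _ Y).symm (𝟙 _))
    rw [Equiv.apply_symm_apply, Category.id_comp] at h₁Y h₂Y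
    rw [← h₁Y, ← h₂Y, h]
  · intro h X
    apply (Θ₁ X (L₂ X)).injective
    have h₁X := h₁ X _ (𝟙 _)
    have h₂X := h₂ X _ (𝟙 _)
    rw [Category.comp_id] at h₁X h₂X
    rw [h₁X, h₂X, h]

namespace SkewMonoidalStruct

variable {C : Type u} [Category.{v} C] {M : SkewMonoidalStruct C}

theorem Closed.adj_natural (Cl : M.Closed) {X' X A' A B B' : C} (f : X' ⟶ X) (u : A' ⟶ A)
    (g : M.tensor X A ⟶ B) (w : B ⟶ B') :
    Cl.adj X' A' B' (M.tensorHom f u ≫ g ≫ w) = f ≫ Cl.adj X A B g ≫ Cl.ihomMap u w := by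
  have hfu : M.tensorHom f u = M.tensorHom f (𝟙 A') ≫ M.tensorHom (𝟙 X) u := by
    rw [← M.tensorHom_comp, Category.comp_id, Category.id_comp]
  have huw : Cl.ihomMap u w = Cl.ihomMap (𝟙 A) w ≫ Cl.ihomMap u (𝟙 B') := by
    rw [← Cl.ihomMap_comp, Category.comp_id, Category.comp_id]
  rw [hfu, Category.assoc, Cl.adj_natural_left, Cl.adj_natural_mid, Cl.adj_natural_right, huw,
    Category.assoc]

variable (Cl : M.Closed)

theorem Φ_natural {X' X A' A B' B Y Y' : C} (f : X' ⟶ X) (u : A' ⟶ A) (v : B' ⟶ B)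
    (g : M.tensor (M.tensor X A) B ⟶ Y) (w : Y ⟶ Y') :
    M.Φ Cl X' A' B' Y' (M.tensorHom (M.tensorHom f u) v ≫ g ≫ w) =
      f ≫ M.Φ Cl X A B Y g ≫ Cl.ihomMap u (Cl.ihomMap v w) := by
  simp only [Φ, Equiv.trans_apply, Cl.adj_natural]

theorem Φ_comp_right {X A B Y Y' : C} (g : M.tensor (M.tensor X A) B ⟶ Y) (w : Y ⟶ Y') :
    M.Φ Cl X A B Y' (g ≫ w) = M.Φ Cl X A B Y g ≫ Cl.ihomMap (𝟙 A) (Cl.ihomMap (𝟙 B) w) := by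
  simpa [M.tensorHom_id] using Φ_natural Cl (𝟙 X) (𝟙 A) (𝟙 B) g w

theorem Φ_symm_apply {X A B Y : C} (k : X ⟶ Cl.ihom A (Cl.ihom B Y)) :
    (M.Φ Cl X A B Y).symm k =
      M.tensorHom (M.tensorHom k (𝟙 A)) (𝟙 B) ≫ (M.Φ Cl _ A B Y).symm (𝟙 _) := by
  rw [Equiv.symm_apply_eq]
  simpa [Cl.ihomMap_id] using
    (Φ_natural Cl k (𝟙 A) (𝟙 B) ((M.Φ Cl _ A B Y).symm (𝟙 _)) (𝟙 Y)).symm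

section Swap

variable {s t : ∀ X A B : C, M.tensor (M.tensor X A) B ⟶ M.tensor (M.tensor X B) A}
  {s' t' : ∀ A B Y : C, Cl.ihom A (Cl.ihom B Y) ⟶ Cl.ihom B (Cl.ihom A Y)}

def Intertwines (s : ∀ X A B : C, M.tensor (M.tensor X A) B ⟶ M.tensor (M.tensor X B) A)
    (s' : ∀ A B Y : C, Cl.ihom A (Cl.ihom B Y) ⟶ Cl.ihom B (Cl.ihom A Y)) : Prop :=
  ∀ (X A B Y : C) (g : M.tensor (M.tensor X B) A ⟶ Y),
    M.Φ Cl X A B Y (s X A B ≫ g) = M.Φ Cl X B A Y g ≫ s' B A Y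

def ihomSwapOf (s : ∀ X A B : C, M.tensor (M.tensor X A) B ⟶ M.tensor (M.tensor X B) A)
    (A B Y : C) : Cl.ihom A (Cl.ihom B Y) ⟶ Cl.ihom B (Cl.ihom A Y) :=
  M.Φ Cl _ B A Y (s _ B A ≫ (M.Φ Cl _ A B Y).symm (𝟙 _))

def tensorSwapOf (s' : ∀ A B Y : C, Cl.ihom A (Cl.ihom B Y) ⟶ Cl.ihom B (Cl.ihom A Y))
    (X A B : C) : M.tensor (M.tensor X A) B ⟶ M.tensor (M.tensor X B) A :=
  (M.Φ Cl X A B _).symm (M.Φ Cl X B A _ (𝟙 _) ≫ s' B A _)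

def Ψ (X A B Cc Y : C) :
    (M.tensor (M.tensor (M.tensor X A) B) Cc ⟶ Y) ≃
      (X ⟶ Cl.ihom A (Cl.ihom B (Cl.ihom Cc Y))) :=
  (Cl.adj (M.tensor (M.tensor X A) B) Cc Y).trans (M.Φ Cl X A B (Cl.ihom Cc Y))

theorem intertwines_ihomSwapOf (hs : M.SNatural s) : Intertwines Cl s (ihomSwapOf Cl s) := by
  intro X A B Y g
  set k := M.Φ Cl X B A Y g
  calc M.Φ Cl X A B Y (s X A B ≫ g)
      = M.Φ Cl X A B Y (s X A B ≫ M.tensorHom (M.tensorHom k (𝟙 B)) (𝟙 A) ≫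
          (M.Φ Cl _ B A Y).symm (𝟙 _)) := by
        rw [← Φ_symm_apply, Equiv.symm_apply_apply]
    _ = M.Φ Cl X A B Y (M.tensorHom (M.tensorHom k (𝟙 A)) (𝟙 B) ≫ s _ A B ≫
          (M.Φ Cl _ B A Y).symm (𝟙 _)) := by
        rw [← Category.assoc, ← hs, Category.assoc]
    _ = k ≫ ihomSwapOf Cl s B A Y := by
        rw [ihomSwapOf]
        simpa [Cl.ihomMap_id] using Φ_natural Cl k (𝟙 A) (𝟙 B) _ (𝟙 Y)

theorem intertwines_tensorSwapOf (hs' : M.S'Nat Cl s') :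
    Intertwines Cl (tensorSwapOf Cl s') s' := by
  intro X A B Y g
  rw [Φ_comp_right, tensorSwapOf, Equiv.apply_symm_apply, Category.assoc, ← hs',
    ← Category.assoc, ← Φ_comp_right, Category.id_comp]

namespace Intertwines

theorem left_unique {s₁ s₂ : ∀ X A B : C, M.tensor (M.tensor X A) B ⟶ M.tensor (M.tensor X B) A}
    (h₁ : Intertwines Cl s₁ s') (h₂ : Intertwines Cl s₂ s') : s₁ = s₂ := by
  funext X A B
  exact (forall_eq_iff_forall_eq_of_homEquiv (fun X Y => M.Φ Cl X A B Y)
    (fun X Y => M.Φ Cl X B A Y) (h₁ · A B) (h₂ · A B)).2 (fun _ => rfl) X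

theorem right_unique {s₁' s₂' : ∀ A B Y : C, Cl.ihom A (Cl.ihom B Y) ⟶ Cl.ihom B (Cl.ihom A Y)}
    (h₁ : Intertwines Cl s s₁') (h₂ : Intertwines Cl s s₂') : s₁' = s₂' := by
  funext B A Y
  exact (forall_eq_iff_forall_eq_of_homEquiv (fun X Y => M.Φ Cl X A B Y)
    (fun X Y => M.Φ Cl X B A Y) (h₁ · A B) (h₂ · A B)).1 (fun _ => rfl) Y

theorem comp_eq_id_iff (hs : Intertwines Cl s s') (ht : Intertwines Cl t t') :
    (∀ X A B, s X A B ≫ t X B A = 𝟙 _) ↔ (∀ A B Y, t' A B Y ≫ s' B A Y = 𝟙 _) := by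
  have key : ∀ A B, (∀ X, s X A B ≫ t X B A = 𝟙 _) ↔ (∀ Y, t' A B Y ≫ s' B A Y = 𝟙 _) :=
    fun A B => forall_eq_iff_forall_eq_of_homEquiv (fun X Y => M.Φ Cl X A B Y)
      (fun X Y => M.Φ Cl X A B Y)
      (fun X Y g => by rw [Category.assoc, hs, ht, Category.assoc])
      (fun X Y g => by rw [Category.id_comp, Category.comp_id])
  exact ⟨fun h A B => (key A B).1 fun X => h X A B, fun h X A B => (key A B).2 (h A B) X⟩

theorem s'Nat (hP : Intertwines Cl s s') (hs : M.SNatural s) : M.S'Nat Cl s' := by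
  intro A' A B' B Y Y' f g h
  set ε := (M.Φ Cl _ A B Y).symm (𝟙 (Cl.ihom A (Cl.ihom B Y)))
  have hε : M.Φ Cl _ A B Y ε = 𝟙 _ := Equiv.apply_symm_apply _ _
  calc Cl.ihomMap f (Cl.ihomMap g h) ≫ s' A' B' Y'
      = M.Φ Cl _ A' B' Y' (M.tensorHom (M.tensorHom (𝟙 _) f) g ≫ ε ≫ h) ≫ s' A' B' Y' := by
        rw [Φ_natural, hε, Category.id_comp, Category.id_comp]
    _ = M.Φ Cl _ B' A' Y' (M.tensorHom (M.tensorHom (𝟙 _) g) f ≫ s _ B A ≫ ε ≫ h) := by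
        rw [← hP, ← Category.assoc, ← hs, Category.assoc]
    _ = s' A B Y ≫ Cl.ihomMap g (Cl.ihomMap f h) := by
        rw [← Category.assoc (s _ B A), Φ_natural, Category.id_comp, hP, hε, Category.id_comp]

theorem sNatural (hP : Intertwines Cl s s') (hs' : M.S'Nat Cl s') : M.SNatural s := by
  intro X X' A A' B B' f g h
  apply (M.Φ Cl X A B (M.tensor (M.tensor X' B') A')).injective
  have hΦ : ∀ (u : B ⟶ B') (v : A ⟶ A'),
      M.Φ Cl X B A _ (M.tensorHom (M.tensorHom f u) v) =
        f ≫ M.Φ Cl X' B' A' _ (𝟙 _) ≫ Cl.ihomMap u (Cl.ihomMap v (𝟙 _)) := fun u v => by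
    simpa using Φ_natural Cl f u v (𝟙 _) (𝟙 _)
  calc M.Φ Cl X A B _ (M.tensorHom (M.tensorHom f g) h ≫ s X' A' B')
      = f ≫ M.Φ Cl X' A' B' _ (s X' A' B' ≫ 𝟙 _) ≫ Cl.ihomMap g (Cl.ihomMap h (𝟙 _)) := by
        simpa using Φ_natural Cl f g h (s X' A' B') (𝟙 _)
    _ = f ≫ M.Φ Cl X' B' A' _ (𝟙 _) ≫ Cl.ihomMap h (Cl.ihomMap g (𝟙 _)) ≫ s' B A _ := by
        rw [hP, Category.assoc, ← hs']
    _ = M.Φ Cl X A B _ (s X A B ≫ M.tensorHom (M.tensorHom f h) g) := by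
        rw [hP, hΦ, Category.assoc, Category.assoc]

theorem isIso_right (hP : Intertwines Cl s s') (hs : M.SNatural s) [∀ X A B, IsIso (s X A B)]
    (A B Y : C) : IsIso (s' A B Y) := by
  let t : ∀ X A B : C, M.tensor (M.tensor X A) B ⟶ M.tensor (M.tensor X B) A :=
    fun X A B => inv (s X B A)
  have ht : M.SNatural t := fun f g h => by
    rw [IsIso.comp_inv_eq, Category.assoc, IsIso.eq_inv_comp, hs]
  have hPt := intertwines_ihomSwapOf Cl ht
  exact ⟨ihomSwapOf Cl t B A Y,
    (comp_eq_id_iff Cl hPt hP).1 (fun _ _ _ => IsIso.inv_hom_id _) A B Y,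
    (comp_eq_id_iff Cl hP hPt).1 (fun _ _ _ => IsIso.hom_inv_id _) B A Y⟩

theorem isIso_left (hP : Intertwines Cl s s') (hs' : M.S'Nat Cl s') [∀ A B Y, IsIso (s' A B Y)]
    (X A B : C) : IsIso (s X A B) := by
  let t' : ∀ A B Y : C, Cl.ihom A (Cl.ihom B Y) ⟶ Cl.ihom B (Cl.ihom A Y) :=
    fun A B Y => inv (s' B A Y)
  have ht' : M.S'Nat Cl t' := fun f g h => by
    rw [IsIso.comp_inv_eq, Category.assoc, IsIso.eq_inv_comp, hs']
  have hPt := intertwines_tensorSwapOf Cl ht'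
  exact ⟨tensorSwapOf Cl t' X B A,
    (comp_eq_id_iff Cl hP hPt).2 (fun _ _ _ => IsIso.inv_hom_id _) X A B,
    (comp_eq_id_iff Cl hPt hP).2 (fun _ _ _ => IsIso.hom_inv_id _) X B A⟩

theorem Ψ_swap_outer (hP : Intertwines Cl s s') (X A B Cc Y : C)
    (g : M.tensor (M.tensor (M.tensor X A) Cc) B ⟶ Y) :
    Ψ Cl X A B Cc Y (s (M.tensor X A) B Cc ≫ g) =
      Ψ Cl X A Cc B Y g ≫ Cl.ihomMap (𝟙 A) (s' Cc B Y) := by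
  change Cl.adj X A _ (M.Φ Cl _ B Cc Y _) = Cl.adj X A _ (M.Φ Cl _ Cc B Y _) ≫ _
  rw [hP, Cl.adj_natural_right]

theorem Ψ_swap_inner (hP : Intertwines Cl s s') (X A B Cc Y : C)
    (g : M.tensor (M.tensor (M.tensor X B) A) Cc ⟶ Y) :
    Ψ Cl X A B Cc Y (M.tensorHom (s X A B) (𝟙 Cc) ≫ g) =
      Ψ Cl X B A Cc Y g ≫ s' B A (Cl.ihom Cc Y) := by
  simp only [Ψ, Equiv.trans_apply, Cl.adj_natural_left]
  exact hP _ _ _ _ _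

theorem s2_iff (hP : Intertwines Cl s s') : M.S2 s ↔ M.S2' Cl s' := by
  have key : ∀ A B Cc, (∀ X,
      s (M.tensor X A) B Cc ≫ M.tensorHom (s X A Cc) (𝟙 B) ≫ s (M.tensor X Cc) A B =
        M.tensorHom (s X A B) (𝟙 Cc) ≫ s (M.tensor X B) A Cc ≫
          M.tensorHom (s X B Cc) (𝟙 A)) ↔ (∀ Y,
      Cl.ihomMap (𝟙 Cc) (s' B A Y) ≫ s' Cc A (Cl.ihom B Y) ≫ Cl.ihomMap (𝟙 A) (s' Cc B Y) =
        s' Cc B (Cl.ihom A Y) ≫ Cl.ihomMap (𝟙 B) (s' Cc A Y) ≫ s' B A (Cl.ihom Cc Y)) :=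
    fun A B Cc => forall_eq_iff_forall_eq_of_homEquiv (fun X Y => Ψ Cl X A B Cc Y)
      (fun X Y => Ψ Cl X Cc B A Y)
      (fun X Y g => by
        simp only [Category.assoc, Ψ_swap_outer Cl hP, Ψ_swap_inner Cl hP])
      (fun X Y g => by
        simp only [Category.assoc, Ψ_swap_outer Cl hP, Ψ_swap_inner Cl hP])
  exact ⟨fun h A B Cc Y => ((key A B Cc).1 (fun X => h X A B Cc) Y).symm,
    fun h X A B Cc => (key A B Cc).2 (fun Y => (h A B Cc Y).symm) X⟩

end Intertwines

end Swap

end SkewMonoidalStruct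

open SkewMonoidalStruct in
/-- Theorem 3.1, parts concerning the correspondence, (S2)/(S2')
and symmetry: for a closed skew monoidal category, natural isomorphisms
`s : (XA)B ⟶ (XB)A` are in bijection with natural isomorphisms
`s' : [A,[B,Y]] ⟶ [B,[A,Y]]`, via the requirement that the adjunction
isomorphisms intertwine `C(s,1)` with `C(1,s')`; moreover `s` satisfies (S2)
iff `s'` satisfies (S2'), and `s ∘ s = id` iff `s' ∘ s' = id`. -/
theorem stmt10 {C : Type u} [Category.{v} C] (M : SkewMonoidalStruct C) (Cl : M.Closed) :
    ∃ E : {s : ∀ X A B : C, M.tensor (M.tensor X A) B ⟶ M.tensor (M.tensor X B) A //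
            M.SNatural s ∧ ∀ X A B, IsIso (s X A B)} ≃
          {s' : ∀ A B Y : C, Cl.ihom A (Cl.ihom B Y) ⟶ Cl.ihom B (Cl.ihom A Y) //
            M.S'Nat Cl s' ∧ ∀ A B Y, IsIso (s' A B Y)},
      (∀ (s : {s : ∀ X A B : C, M.tensor (M.tensor X A) B ⟶ M.tensor (M.tensor X B) A //
            M.SNatural s ∧ ∀ X A B, IsIso (s X A B)})
         (X A B Y : C) (g : M.tensor (M.tensor X B) A ⟶ Y),
          M.Φ Cl X A B Y (s.1 X A B ≫ g) =
            M.Φ Cl X B A Y g ≫ (E s).1 B A Y) ∧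
      (∀ s, (M.S2 s.1 ↔ M.S2' Cl (E s).1)) ∧
      (∀ s, ((∀ X A B : C, s.1 X A B ≫ s.1 X B A = 𝟙 _) ↔
             (∀ A B Y : C, (E s).1 A B Y ≫ (E s).1 B A Y = 𝟙 _))) := by
  have hP := fun (s : {s : ∀ X A B : C, M.tensor (M.tensor X A) B ⟶ M.tensor (M.tensor X B) A //
      M.SNatural s ∧ ∀ X A B, IsIso (s X A B)}) => intertwines_ihomSwapOf Cl s.2.1
  have hP' := fun (s' : {s' : ∀ A B Y : C, Cl.ihom A (Cl.ihom B Y) ⟶ Cl.ihom B (Cl.ihom A Y) //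
      M.S'Nat Cl s' ∧ ∀ A B Y, IsIso (s' A B Y)}) => intertwines_tensorSwapOf Cl s'.2.1
  let E : _ ≃ _ :=
    { toFun := fun s => ⟨ihomSwapOf Cl s.1, (hP s).s'Nat Cl s.2.1,
        have := s.2.2; (hP s).isIso_right Cl s.2.1⟩
      invFun := fun s' => ⟨tensorSwapOf Cl s'.1, (hP' s').sNatural Cl s'.2.1,
        have := s'.2.2; (hP' s').isIso_left Cl s'.2.1⟩
      left_inv := fun s => Subtype.ext <| Intertwines.left_unique Cl
        (intertwines_tensorSwapOf Cl ((hP s).s'Nat Cl s.2.1)) (hP s)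
      right_inv := fun s' => Subtype.ext <| Intertwines.right_unique Cl
        (intertwines_ihomSwapOf Cl ((hP' s').sNatural Cl s'.2.1)) (hP' s') }
  exact ⟨E, fun s => hP s, fun s => (hP s).s2_iff Cl,
    fun s => (hP s).comp_eq_id_iff Cl (hP s)⟩
end

section
/- Let C be a monoidal category equipped with a skew cowarping (Q, K, v, v₀, k) and let y : QX⊗QY → QY⊗QX be a natural isomorphism satisfying: (i) the Yang–Baxter equation (y⊗1)(1⊗y)(y⊗1) = (1⊗y)(y⊗1)(1⊗y); (ii) (v⊗1) ∘ (1⊗y) ∘ (y⊗1) = y ∘ (1⊗v) : QX⊗QY⊗QZ → Q(Y⊗QZ)⊗QX; (iii) (1⊗v) ∘ (y⊗1) ∘ (1⊗y) = y ∘ (v⊗1) : QX⊗QY⊗QZ → QZ⊗Q(X⊗QY); (iv) Q(1⊗y) ∘ v ∘ (v⊗1) = v ∘ (v⊗1) ∘ (1⊗y) : QX⊗QY⊗QZ → Q(X⊗QZ⊗QY). Then the maps s : (X*Y)*Z = X⊗QY⊗QZ →^{1⊗y} X⊗QZ⊗QY = (X*Z)*Y define a braiding on the cowarped skew monoidal category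 C[Q]. -/
/-!
Every map in the four braiding axioms of `C[Q]` acts only on the last three factors of
`X ⊗ QA ⊗ QB ⊗ QC`: up to associators it is `X ◁ f`, where `f` is the corresponding composite of
`y`, `v` and `Q(1 ⊗ y)`. So (S2), (S3a), (S3b) and (S*) are `X ◁ -` applied to (1), (1a), (1b) and
(funny), conjugated by coherence isomorphisms.
-/

open CategoryTheory MonoidalCategory

universe v u

variable {C : Type u} [Category.{v} C] [MonoidalCategory C]

namespace SkewCowarping

variable (Q : C ⥤ C) (K : C)
  (v : ∀ X Y : C, Q.obj X ⊗ Q.obj Y ⟶ Q.obj (X ⊗ Q.obj Y))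
  (v₀ : 𝟙_ C ⟶ Q.obj K) (k : ∀ X : C, K ⊗ Q.obj X ⟶ X)

/-- The tensor product of the cowarped skew monoidal category `C[Q]`:
`X * Y = X ⊗ QY`. -/
def star (X Y : C) : C := X ⊗ Q.obj Y

/-- The action of `C[Q]` on morphisms: `f * g = f ⊗ Qg`. -/
def starHom {X X' Y Y' : C} (f : X ⟶ X') (g : Y ⟶ Y') :
    star Q X Y ⟶ star Q X' Y' := f ⊗ₘ Q.map g

/-- The associator of `C[Q]`. -/
def sAssoc (X Y Z : C) : star Q (star Q X Y) Z ⟶ star Q X (star Q Y Z) :=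
  (α_ X (Q.obj Y) (Q.obj Z)).hom ≫ (X ◁ v Y Z)

/-- The left unit of `C[Q]`. -/
def sL (X : C) : star Q K X ⟶ X := k X

/-- The right unit of `C[Q]`. -/
def sR (X : C) : X ⟶ star Q X K := (ρ_ X).inv ≫ (X ◁ v₀)

/-- Naturality of `v`. -/
def VNatural : Prop :=
  ∀ {X X' Y Y' : C} (f : X ⟶ X') (g : Y ⟶ Y'),
    (Q.map f ⊗ₘ Q.map g) ≫ v X' Y' = v X Y ≫ Q.map (f ⊗ₘ Q.map g)

/-- Naturality of `k`. -/
def KNatural : Prop :=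
  ∀ {X X' : C} (f : X ⟶ X'), (K ◁ Q.map f) ≫ k X' = k X ≫ f

/-- The five axioms of a skew cowarping, i.e. the five skew monoidal
coherence axioms for the cowarped structure `C[Q]`. -/
def CowarpAxioms : Prop :=
  (∀ A B Cc D : C,
    starHom Q (sAssoc Q v A B Cc) (𝟙 D) ≫ sAssoc Q v A (star Q B Cc) D ≫
        starHom Q (𝟙 A) (sAssoc Q v B Cc D) =
      sAssoc Q v (star Q A B) Cc D ≫ sAssoc Q v A B (star Q Cc D)) ∧
  (∀ A B : C,
    sAssoc Q v K A B ≫ sL Q K k (star Q A B) = starHom Q (sL Q K k A) (𝟙 B)) ∧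
  (∀ A B : C,
    starHom Q (sR Q K v₀ A) (𝟙 B) ≫ sAssoc Q v A K B ≫
        starHom Q (𝟙 A) (sL Q K k B) = 𝟙 (star Q A B)) ∧
  (∀ A B : C,
    sR Q K v₀ (star Q A B) ≫ sAssoc Q v A B K = starHom Q (𝟙 A) (sR Q K v₀ B)) ∧
  (sR Q K v₀ K ≫ sL Q K k K = 𝟙 K)

variable (y : ∀ X Y : C, Q.obj X ⊗ Q.obj Y ≅ Q.obj Y ⊗ Q.obj X)

/-- Naturality of a family `y : QX ⊗ QY ≅ QY ⊗ QX`. -/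
def YNatural : Prop :=
  ∀ {X X' Y Y' : C} (f : X ⟶ X') (g : Y ⟶ Y'),
    (Q.map f ⊗ₘ Q.map g) ≫ (y X' Y').hom = (y X Y).hom ≫ (Q.map g ⊗ₘ Q.map f)

/-- Equation (1): the Yang–Baxter equation for `y`. -/
def Y1 : Prop :=
  ∀ X Y Z : C,
    ((y X Y).hom ▷ Q.obj Z) ≫ (α_ _ _ _).hom ≫ (Q.obj Y ◁ (y X Z).hom) ≫
        (α_ _ _ _).inv ≫ ((y Y Z).hom ▷ Q.obj X) =
      (α_ _ _ _).hom ≫ (Q.obj X ◁ (y Y Z).hom) ≫ (α_ _ _ _).inv ≫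
        ((y X Z).hom ▷ Q.obj Y) ≫ (α_ _ _ _).hom ≫ (Q.obj Z ◁ (y X Y).hom) ≫
          (α_ _ _ _).inv

/-- Equation (1a): `(v⊗1) ∘ (1⊗y) ∘ (y⊗1) = y ∘ (1⊗v)`. -/
def Y1a : Prop :=
  ∀ X Y Z : C,
    ((y X Y).hom ▷ Q.obj Z) ≫ (α_ _ _ _).hom ≫ (Q.obj Y ◁ (y X Z).hom) ≫
        (α_ _ _ _).inv ≫ (v Y Z ▷ Q.obj X) =
      (α_ _ _ _).hom ≫ (Q.obj X ◁ v Y Z) ≫ (y X (Y ⊗ Q.obj Z)).hom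

/-- Equation (1b): `(1⊗v) ∘ (y⊗1) ∘ (1⊗y) = y ∘ (v⊗1)`. -/
def Y1b : Prop :=
  ∀ X Y Z : C,
    (α_ _ _ _).hom ≫ (Q.obj X ◁ (y Y Z).hom) ≫ (α_ _ _ _).inv ≫
        ((y X Z).hom ▷ Q.obj Y) ≫ (α_ _ _ _).hom ≫ (Q.obj Z ◁ v X Y) =
      (v X Y ▷ Q.obj Z) ≫ (y (X ⊗ Q.obj Y) Z).hom

/-- Equation (funny): `Q(1⊗y) ∘ v ∘ (v⊗1) = v ∘ (v⊗1) ∘ (1⊗y)`. -/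
def Yfunny : Prop :=
  ∀ X Y Z : C,
    (v X Y ▷ Q.obj Z) ≫ v (X ⊗ Q.obj Y) Z ≫
        Q.map ((α_ X (Q.obj Y) (Q.obj Z)).hom ≫ (X ◁ (y Y Z).hom) ≫
          (α_ X (Q.obj Z) (Q.obj Y)).inv) =
      (α_ _ _ _).hom ≫ (Q.obj X ◁ (y Y Z).hom) ≫ (α_ _ _ _).inv ≫
        (v X Z ▷ Q.obj Y) ≫ v (X ⊗ Q.obj Z) Y

/-- The induced candidate braiding on `C[Q]`. -/
def sB (X A B : C) : star Q (star Q X A) B ⟶ star Q (star Q X B) A :=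
  (α_ X (Q.obj A) (Q.obj B)).hom ≫ (X ◁ (y A B).hom) ≫ (α_ X (Q.obj B) (Q.obj A)).inv

end SkewCowarping

namespace SkewCowarping

variable {Q : C ⥤ C} {v : ∀ X Y : C, Q.obj X ⊗ Q.obj Y ⟶ Q.obj (X ⊗ Q.obj Y)}
  {y : ∀ X Y : C, Q.obj X ⊗ Q.obj Y ≅ Q.obj Y ⊗ Q.obj X}

theorem starHom_id_right {X X' : C} (f : X ⟶ X') (Y : C) :
    starHom Q f (𝟙 Y) = f ▷ Q.obj Y := by
  unfold starHom star
  simp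

theorem starHom_id_left (X : C) {Y Y' : C} (g : Y ⟶ Y') :
    starHom Q (𝟙 X) g = X ◁ Q.map g := by
  unfold starHom star
  simp

theorem s2_of_y1 (h1 : Y1 Q y) (X A B Cc : C) :
    sB Q y (star Q X A) B Cc ≫ starHom Q (sB Q y X A Cc) (𝟙 B) ≫ sB Q y (star Q X Cc) A B =
      starHom Q (sB Q y X A B) (𝟙 Cc) ≫ sB Q y (star Q X B) A Cc ≫
        starHom Q (sB Q y X B Cc) (𝟙 A) := by
  have whiskered := congrArg (fun f => 𝟙 (((X ⊗ Q.obj A) ⊗ Q.obj B) ⊗ Q.obj Cc) ⊗≫ X ◁ f ⊗≫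
    𝟙 (((X ⊗ Q.obj Cc) ⊗ Q.obj B) ⊗ Q.obj A)) (h1 A B Cc)
  simp only [starHom_id_right, sB, star]
  convert whiskered.symm using 1 <;> monoidal

theorem s3a_of_y1a (h1a : Y1a Q v y) (X A B Cc : C) :
    starHom Q (sB Q y X A B) (𝟙 Cc) ≫ sB Q y (star Q X B) A Cc ≫
        starHom Q (sAssoc Q v X B Cc) (𝟙 A) =
      sAssoc Q v (star Q X A) B Cc ≫ sB Q y X A (star Q B Cc) := by
  have whiskered := congrArg (fun f => 𝟙 (((X ⊗ Q.obj A) ⊗ Q.obj B) ⊗ Q.obj Cc) ⊗≫ X ◁ f ⊗≫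
    𝟙 ((X ⊗ Q.obj (B ⊗ Q.obj Cc)) ⊗ Q.obj A)) (h1a A B Cc)
  simp only [starHom_id_right, sB, sAssoc, star]
  convert whiskered using 1 <;> monoidal

theorem s3b_of_y1b (h1b : Y1b Q v y) (X A B Cc : C) :
    sB Q y (star Q X A) B Cc ≫ starHom Q (sB Q y X A Cc) (𝟙 B) ≫
        sAssoc Q v (star Q X Cc) A B =
      starHom Q (sAssoc Q v X A B) (𝟙 Cc) ≫ sB Q y X (star Q A B) Cc := by
  have whiskered := congrArg (fun f => 𝟙 (((X ⊗ Q.obj A) ⊗ Q.obj B) ⊗ Q.obj Cc) ⊗≫ X ◁ f ⊗≫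
    𝟙 ((X ⊗ Q.obj Cc) ⊗ Q.obj (A ⊗ Q.obj B))) (h1b A B Cc)
  simp only [starHom_id_right, sB, sAssoc, star]
  convert whiskered using 1 <;> monoidal

theorem sStar_of_yFunny (hf : Yfunny Q v y) (X A B Cc : C) :
    starHom Q (sAssoc Q v X A B) (𝟙 Cc) ≫ sAssoc Q v X (star Q A B) Cc ≫
        starHom Q (𝟙 X) (sB Q y A B Cc) =
      sB Q y (star Q X A) B Cc ≫ starHom Q (sAssoc Q v X A Cc) (𝟙 B) ≫
        sAssoc Q v X (star Q A Cc) B := by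
  have whiskered := congrArg (fun f => 𝟙 (((X ⊗ Q.obj A) ⊗ Q.obj B) ⊗ Q.obj Cc) ⊗≫ X ◁ f ⊗≫
    𝟙 (X ⊗ Q.obj ((A ⊗ Q.obj Cc) ⊗ Q.obj B))) (hf A B Cc)
  simp only [starHom_id_right, starHom_id_left, sB, sAssoc, star]
  convert whiskered using 1 <;> monoidal

end SkewCowarping

open SkewCowarping in
theorem stmt11_general {C : Type u} [Category.{v} C] [MonoidalCategory C]
    (Q : C ⥤ C)
    (v : ∀ X Y : C, Q.obj X ⊗ Q.obj Y ⟶ Q.obj (X ⊗ Q.obj Y))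
    (y : ∀ X Y : C, Q.obj X ⊗ Q.obj Y ≅ Q.obj Y ⊗ Q.obj X)
    (h1 : Y1 Q y) (h1a : Y1a Q v y) (h1b : Y1b Q v y) (hf : Yfunny Q v y) :
    -- (S2)
    (∀ X A B Cc : C,
      sB Q y (star Q X A) B Cc ≫ starHom Q (sB Q y X A Cc) (𝟙 B) ≫
          sB Q y (star Q X Cc) A B =
        starHom Q (sB Q y X A B) (𝟙 Cc) ≫ sB Q y (star Q X B) A Cc ≫
          starHom Q (sB Q y X B Cc) (𝟙 A)) ∧
    -- (S3a)
    (∀ X A B Cc : C,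
      starHom Q (sB Q y X A B) (𝟙 Cc) ≫ sB Q y (star Q X B) A Cc ≫
          starHom Q (sAssoc Q v X B Cc) (𝟙 A) =
        sAssoc Q v (star Q X A) B Cc ≫ sB Q y X A (star Q B Cc)) ∧
    -- (S3b)
    (∀ X A B Cc : C,
      sB Q y (star Q X A) B Cc ≫ starHom Q (sB Q y X A Cc) (𝟙 B) ≫
          sAssoc Q v (star Q X Cc) A B =
        starHom Q (sAssoc Q v X A B) (𝟙 Cc) ≫ sB Q y X (star Q A B) Cc) ∧
    -- (S*)
    (∀ X A B Cc : C,
      starHom Q (sAssoc Q v X A B) (𝟙 Cc) ≫ sAssoc Q v X (star Q A B) Cc ≫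
          starHom Q (𝟙 X) (sB Q y A B Cc) =
        sB Q y (star Q X A) B Cc ≫ starHom Q (sAssoc Q v X A Cc) (𝟙 B) ≫
          sAssoc Q v X (star Q A Cc) B) :=
  ⟨s2_of_y1 h1, s3a_of_y1a h1a, s3b_of_y1b h1b, sStar_of_yFunny hf⟩

open SkewCowarping in
/-- Proposition 4.1, "if" direction: if `y : QX⊗QY ≅ QY⊗QX`
is a natural isomorphism satisfying equations (1), (1a), (1b) and (funny), then
the induced maps `1 ⊗ y : (X*Y)*Z ⟶ (X*Z)*Y` form a braiding on the cowarped
skew monoidal category `C[Q]`: they satisfy (S2), (S3a), (S3b) and (S*). -/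
theorem stmt11 {C : Type u} [Category.{v} C] [MonoidalCategory C]
    (Q : C ⥤ C) (K : C)
    (v : ∀ X Y : C, Q.obj X ⊗ Q.obj Y ⟶ Q.obj (X ⊗ Q.obj Y))
    (v₀ : 𝟙_ C ⟶ Q.obj K) (k : ∀ X : C, K ⊗ Q.obj X ⟶ X)
    (hv : VNatural Q v) (hk : KNatural Q K k)
    (hax : CowarpAxioms Q K v v₀ k)
    (y : ∀ X Y : C, Q.obj X ⊗ Q.obj Y ≅ Q.obj Y ⊗ Q.obj X)
    (hy : YNatural Q y)
    (h1 : Y1 Q y) (h1a : Y1a Q v y) (h1b : Y1b Q v y) (hf : Yfunny Q v y) :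
    -- (S2)
    (∀ X A B Cc : C,
      sB Q y (star Q X A) B Cc ≫ starHom Q (sB Q y X A Cc) (𝟙 B) ≫
          sB Q y (star Q X Cc) A B =
        starHom Q (sB Q y X A B) (𝟙 Cc) ≫ sB Q y (star Q X B) A Cc ≫
          starHom Q (sB Q y X B Cc) (𝟙 A)) ∧
    -- (S3a)
    (∀ X A B Cc : C,
      starHom Q (sB Q y X A B) (𝟙 Cc) ≫ sB Q y (star Q X B) A Cc ≫
          starHom Q (sAssoc Q v X B Cc) (𝟙 A) =
        sAssoc Q v (star Q X A) B Cc ≫ sB Q y X A (star Q B Cc)) ∧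
    -- (S3b)
    (∀ X A B Cc : C,
      sB Q y (star Q X A) B Cc ≫ starHom Q (sB Q y X A Cc) (𝟙 B) ≫
          sAssoc Q v (star Q X Cc) A B =
        starHom Q (sAssoc Q v X A B) (𝟙 Cc) ≫ sB Q y X (star Q A B) Cc) ∧
    -- (S*)
    (∀ X A B Cc : C,
      starHom Q (sAssoc Q v X A B) (𝟙 Cc) ≫ sAssoc Q v X (star Q A B) Cc ≫
          starHom Q (𝟙 X) (sB Q y A B Cc) =
        sB Q y (star Q X A) B Cc ≫ starHom Q (sAssoc Q v X A Cc) (𝟙 B) ≫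
          sAssoc Q v X (star Q A Cc) B) :=
  stmt11_general Q v y h1 h1a h1b hf
end

section
/- Let C be a monoidal category in which, for any objects X and A, the family of maps x⊗1 : I⊗A → X⊗A indexed by morphisms x : I → X is jointly epimorphic, and let Q be a skew cowarping on C. Then the construction sending a braiding y on Q to the braiding 1⊗y on the cowarped skew monoidal category C[Q] is a bijection between braidings on Q and braidings on C[Q]. -/
open CategoryTheory MonoidalCategory

universe v u

variable {C : Type u} [Category.{v} C] [MonoidalCategory C]

namespace SkewCowarping

variable (Q : C ⥤ C) (K : C)
  (v : ∀ X Y : C, Q.obj X ⊗ Q.obj Y ⟶ Q.obj (X ⊗ Q.obj Y))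
  (v₀ : 𝟙_ C ⟶ Q.obj K) (k : ∀ X : C, K ⊗ Q.obj X ⟶ X)

/-- A braiding on the skew cowarping `Q`: a natural isomorphism
`y : QX⊗QY ≅ QY⊗QX` satisfying equations (1), (1a), (1b) and (funny). -/
structure QBraiding where
  y : ∀ X Y : C, Q.obj X ⊗ Q.obj Y ≅ Q.obj Y ⊗ Q.obj X
  natural : YNatural Q y
  yb : Y1 Q y
  hex_a : Y1a Q v y
  hex_b : Y1b Q v y
  funny : Yfunny Q v y

/-- A braiding on the cowarped skew monoidal category `C[Q]`: a natural
isomorphism `s : (X*A)*B ≅ (X*B)*A` satisfying (S2), (S3a), (S3b), (S*). -/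
structure CQBraiding where
  s : ∀ X A B : C, star Q (star Q X A) B ≅ star Q (star Q X B) A
  natural : ∀ {X X' A A' B B' : C} (f : X ⟶ X') (g : A ⟶ A') (h : B ⟶ B'),
      starHom Q (starHom Q f g) h ≫ (s X' A' B').hom =
        (s X A B).hom ≫ starHom Q (starHom Q f h) g
  S2 : ∀ X A B Cc : C,
      (s (star Q X A) B Cc).hom ≫ starHom Q (s X A Cc).hom (𝟙 B) ≫
          (s (star Q X Cc) A B).hom =
        starHom Q (s X A B).hom (𝟙 Cc) ≫ (s (star Q X B) A Cc).hom ≫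
          starHom Q (s X B Cc).hom (𝟙 A)
  S3a : ∀ X A B Cc : C,
      starHom Q (s X A B).hom (𝟙 Cc) ≫ (s (star Q X B) A Cc).hom ≫
          starHom Q (sAssoc Q v X B Cc) (𝟙 A) =
        sAssoc Q v (star Q X A) B Cc ≫ (s X A (star Q B Cc)).hom
  S3b : ∀ X A B Cc : C,
      (s (star Q X A) B Cc).hom ≫ starHom Q (s X A Cc).hom (𝟙 B) ≫
          sAssoc Q v (star Q X Cc) A B =
        starHom Q (sAssoc Q v X A B) (𝟙 Cc) ≫ (s X (star Q A B) Cc).hom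
  Sstar : ∀ X A B Cc : C,
      starHom Q (sAssoc Q v X A B) (𝟙 Cc) ≫ sAssoc Q v X (star Q A B) Cc ≫
          starHom Q (𝟙 X) (s A B Cc).hom =
        (s (star Q X A) B Cc).hom ≫ starHom Q (sAssoc Q v X A Cc) (𝟙 B) ≫
          sAssoc Q v X (star Q A Cc) B

end SkewCowarping

/-!
A braiding `s` on `C[Q]` is natural in `X`, so by the joint epimorphy of the points
`x : I ⟶ X` it is determined by its component at `X = I`, which after removing left unitors
is a family `y : QA ⊗ QB ≅ QB ⊗ QA`; hence `s = 1 ⊗ y`. Up to associators, each of the axioms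
(S2), (S3a), (S3b), (S*) for `1 ⊗ y` at `X` is `X ◁ –` applied to the corresponding axiom
(1), (1a), (1b), (funny) for `y`, and whiskering by `I` is faithful, so the axioms correspond.
-/

theorem CategoryTheory.MonoidalCategory.tensorUnit_whiskerLeft_injective {P T : C} :
    Function.Injective (fun f : P ⟶ T => 𝟙_ C ◁ f) := by
  intro f g h
  simpa using h

namespace SkewCowarping

variable (Q : C ⥤ C) (v : ∀ X Y : C, Q.obj X ⊗ Q.obj Y ⟶ Q.obj (X ⊗ Q.obj Y))

attribute [ext] QBraiding CQBraiding

def assoc₄ (X a b c : C) : ((X ⊗ a) ⊗ b) ⊗ c ≅ X ⊗ ((a ⊗ b) ⊗ c) :=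
  whiskerRightIso (α_ X a b) c ≪≫ α_ X (a ⊗ b) c

section sB

variable (y : ∀ X Y : C, Q.obj X ⊗ Q.obj Y ≅ Q.obj Y ⊗ Q.obj X)

def sBIso (X A B : C) : star Q (star Q X A) B ≅ star Q (star Q X B) A :=
  α_ X (Q.obj A) (Q.obj B) ≪≫ whiskerLeftIso X (y A B) ≪≫ (α_ X (Q.obj B) (Q.obj A)).symm

@[simp]
lemma sBIso_hom (X A B : C) : (sBIso Q y X A B).hom = sB Q y X A B := rfl

lemma whiskerRight_whiskerRight_comp_sB {X A B : C} (x : 𝟙_ C ⟶ X) :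
    (x ▷ Q.obj A ▷ Q.obj B) ≫ sB Q y X A B = sB Q y (𝟙_ C) A B ≫ (x ▷ Q.obj B ▷ Q.obj A) := by
  simp only [sB, star, associator_naturality_left_assoc, ← whisker_exchange_assoc,
    associator_inv_naturality_left, Category.assoc]

lemma starHom_comp_sB {X X' A A' B B' : C} (f : X ⟶ X') (g : A ⟶ A') (h : B ⟶ B') :
    starHom Q (starHom Q f g) h ≫ sB Q y X' A' B' =
      (α_ X (Q.obj A) (Q.obj B)).hom ≫
        (X ◁ ((Q.map g ⊗ₘ Q.map h) ≫ (y A' B').hom)) ≫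
          (f ▷ (Q.obj B' ⊗ Q.obj A')) ≫ (α_ X' (Q.obj B') (Q.obj A')).inv := by
  simp only [sB, starHom, star]
  rw [associator_naturality_assoc]
  slice_lhs 2 3 => rw [← id_tensorHom, tensorHom_comp_tensorHom, Category.comp_id]
  slice_rhs 2 3 => rw [← id_tensorHom, ← tensorHom_id, tensorHom_comp_tensorHom,
    Category.id_comp, Category.comp_id]

lemma sB_comp_starHom {X X' A A' B B' : C} (f : X ⟶ X') (g : A ⟶ A') (h : B ⟶ B') :
    sB Q y X A B ≫ starHom Q (starHom Q f h) g =
      (α_ X (Q.obj A) (Q.obj B)).hom ≫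
        (X ◁ ((y A B).hom ≫ (Q.map h ⊗ₘ Q.map g))) ≫
          (f ▷ (Q.obj B' ⊗ Q.obj A')) ≫ (α_ X' (Q.obj B') (Q.obj A')).inv := by
  simp only [sB, starHom, star, Category.assoc]
  rw [← associator_inv_naturality]
  slice_lhs 2 3 => rw [← id_tensorHom, tensorHom_comp_tensorHom, Category.id_comp]
  slice_rhs 2 3 => rw [← id_tensorHom, ← tensorHom_id, tensorHom_comp_tensorHom,
    Category.id_comp, Category.comp_id]

lemma S2_lhs_sB (X A B Cc : C) :
    (sB Q y (star Q X A) B Cc) ≫ starHom Q (sB Q y X A Cc) (𝟙 B) ≫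
        (sB Q y (star Q X Cc) A B) =
      (assoc₄ X (Q.obj A) (Q.obj B) (Q.obj Cc)).hom ≫
        (X ◁ ((α_ _ _ _).hom ≫ (Q.obj A ◁ (y B Cc).hom) ≫ (α_ _ _ _).inv ≫
          ((y A Cc).hom ▷ Q.obj B) ≫ (α_ _ _ _).hom ≫ (Q.obj Cc ◁ (y A B).hom) ≫
            (α_ _ _ _).inv)) ≫
          (assoc₄ X (Q.obj Cc) (Q.obj B) (Q.obj A)).inv := by
  simp only [sB, starHom, star, assoc₄, Iso.trans_hom, Iso.trans_inv, whiskerRightIso_hom,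
    whiskerRightIso_inv, CategoryTheory.Functor.map_id, tensorHom_id]
  monoidal

lemma S2_rhs_sB (X A B Cc : C) :
    starHom Q (sB Q y X A B) (𝟙 Cc) ≫ (sB Q y (star Q X B) A Cc) ≫
        starHom Q (sB Q y X B Cc) (𝟙 A) =
      (assoc₄ X (Q.obj A) (Q.obj B) (Q.obj Cc)).hom ≫
        (X ◁ (((y A B).hom ▷ Q.obj Cc) ≫ (α_ _ _ _).hom ≫
          (Q.obj B ◁ (y A Cc).hom) ≫ (α_ _ _ _).inv ≫ ((y B Cc).hom ▷ Q.obj A))) ≫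
          (assoc₄ X (Q.obj Cc) (Q.obj B) (Q.obj A)).inv := by
  simp only [sB, starHom, star, assoc₄, Iso.trans_hom, Iso.trans_inv, whiskerRightIso_hom,
    whiskerRightIso_inv, CategoryTheory.Functor.map_id, tensorHom_id]
  monoidal

lemma S3a_lhs_sB (X A B Cc : C) :
    starHom Q (sB Q y X A B) (𝟙 Cc) ≫ (sB Q y (star Q X B) A Cc) ≫
        starHom Q (sAssoc Q v X B Cc) (𝟙 A) =
      (assoc₄ X (Q.obj A) (Q.obj B) (Q.obj Cc)).hom ≫
        (X ◁ (((y A B).hom ▷ Q.obj Cc) ≫ (α_ _ _ _).hom ≫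
          (Q.obj B ◁ (y A Cc).hom) ≫ (α_ _ _ _).inv ≫ (v B Cc ▷ Q.obj A))) ≫
          (α_ X (Q.obj (B ⊗ Q.obj Cc)) (Q.obj A)).inv := by
  simp only [sB, sAssoc, starHom, star, assoc₄, Iso.trans_hom, whiskerRightIso_hom,
    CategoryTheory.Functor.map_id, tensorHom_id]
  monoidal

lemma S3a_rhs_sB (X A B Cc : C) :
    sAssoc Q v (star Q X A) B Cc ≫ (sB Q y X A (star Q B Cc)) =
      (assoc₄ X (Q.obj A) (Q.obj B) (Q.obj Cc)).hom ≫
        (X ◁ ((α_ _ _ _).hom ≫ (Q.obj A ◁ v B Cc) ≫ (y A (B ⊗ Q.obj Cc)).hom)) ≫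
          (α_ X (Q.obj (B ⊗ Q.obj Cc)) (Q.obj A)).inv := by
  simp only [sB, sAssoc, star, assoc₄, Iso.trans_hom, whiskerRightIso_hom]
  monoidal

lemma S3b_lhs_sB (X A B Cc : C) :
    (sB Q y (star Q X A) B Cc) ≫ starHom Q (sB Q y X A Cc) (𝟙 B) ≫
        sAssoc Q v (star Q X Cc) A B =
      (assoc₄ X (Q.obj A) (Q.obj B) (Q.obj Cc)).hom ≫
        (X ◁ ((α_ _ _ _).hom ≫ (Q.obj A ◁ (y B Cc).hom) ≫ (α_ _ _ _).inv ≫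
          ((y A Cc).hom ▷ Q.obj B) ≫ (α_ _ _ _).hom ≫ (Q.obj Cc ◁ v A B))) ≫
          (α_ X (Q.obj Cc) (Q.obj (A ⊗ Q.obj B))).inv := by
  simp only [sB, sAssoc, starHom, star, assoc₄, Iso.trans_hom, whiskerRightIso_hom,
    CategoryTheory.Functor.map_id, tensorHom_id]
  monoidal

lemma S3b_rhs_sB (X A B Cc : C) :
    starHom Q (sAssoc Q v X A B) (𝟙 Cc) ≫ (sB Q y X (star Q A B) Cc) =
      (assoc₄ X (Q.obj A) (Q.obj B) (Q.obj Cc)).hom ≫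
        (X ◁ ((v A B ▷ Q.obj Cc) ≫ (y (A ⊗ Q.obj B) Cc).hom)) ≫
          (α_ X (Q.obj Cc) (Q.obj (A ⊗ Q.obj B))).inv := by
  simp only [sB, sAssoc, starHom, star, assoc₄, Iso.trans_hom, whiskerRightIso_hom,
    CategoryTheory.Functor.map_id, tensorHom_id]
  monoidal

lemma Sstar_lhs_sB (X A B Cc : C) :
    starHom Q (sAssoc Q v X A B) (𝟙 Cc) ≫ sAssoc Q v X (star Q A B) Cc ≫
        starHom Q (𝟙 X) (sB Q y A B Cc) =
      (assoc₄ X (Q.obj A) (Q.obj B) (Q.obj Cc)).hom ≫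
        (X ◁ ((v A B ▷ Q.obj Cc) ≫ v (A ⊗ Q.obj B) Cc ≫
          Q.map ((α_ A (Q.obj B) (Q.obj Cc)).hom ≫ (A ◁ (y B Cc).hom) ≫
            (α_ A (Q.obj Cc) (Q.obj B)).inv))) := by
  simp only [sB, sAssoc, starHom, star, assoc₄, Iso.trans_hom, whiskerRightIso_hom,
    CategoryTheory.Functor.map_id, tensorHom_id, id_tensorHom]
  monoidal

lemma Sstar_rhs_sB (X A B Cc : C) :
    (sB Q y (star Q X A) B Cc) ≫ starHom Q (sAssoc Q v X A Cc) (𝟙 B) ≫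
        sAssoc Q v X (star Q A Cc) B =
      (assoc₄ X (Q.obj A) (Q.obj B) (Q.obj Cc)).hom ≫
        (X ◁ ((α_ _ _ _).hom ≫ (Q.obj A ◁ (y B Cc).hom) ≫ (α_ _ _ _).inv ≫
          (v A Cc ▷ Q.obj B) ≫ v (A ⊗ Q.obj Cc) B)) := by
  simp only [sB, sAssoc, starHom, star, assoc₄, Iso.trans_hom, whiskerRightIso_hom,
    CategoryTheory.Functor.map_id, tensorHom_id]
  monoidal

end sB

variable {Q v}

def QBraiding.toCQBraiding (yb : QBraiding Q v) : CQBraiding Q v where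
  s := sBIso Q yb.y
  natural f g h := by
    simp only [sBIso_hom]
    rw [starHom_comp_sB, sB_comp_starHom, yb.natural]
  S2 X A B D := by
    simp only [sBIso_hom]
    rw [S2_lhs_sB, S2_rhs_sB, yb.yb]
  S3a X A B D := by
    simp only [sBIso_hom]
    rw [S3a_lhs_sB, S3a_rhs_sB, yb.hex_a]
  S3b X A B D := by
    simp only [sBIso_hom]
    rw [S3b_lhs_sB, S3b_rhs_sB, yb.hex_b]
  Sstar X A B D := by
    simp only [sBIso_hom]
    rw [Sstar_lhs_sB, Sstar_rhs_sB, yb.funny]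

def CQBraiding.yAtUnit (cq : CQBraiding Q v) (A B : C) :
    Q.obj A ⊗ Q.obj B ≅ Q.obj B ⊗ Q.obj A :=
  whiskerRightIso (λ_ (Q.obj A)).symm (Q.obj B) ≪≫ cq.s (𝟙_ C) A B ≪≫
    whiskerRightIso (λ_ (Q.obj B)) (Q.obj A)

lemma CQBraiding.yAtUnit_hom (cq : CQBraiding Q v) (A B : C) :
    (cq.yAtUnit A B).hom =
      ((λ_ (Q.obj A)).inv ▷ Q.obj B) ≫ (cq.s (𝟙_ C) A B).hom ≫ ((λ_ (Q.obj B)).hom ▷ Q.obj A) :=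
  rfl

lemma CQBraiding.s_unit_hom (cq : CQBraiding Q v) (A B : C) :
    (cq.s (𝟙_ C) A B).hom = sB Q cq.yAtUnit (𝟙_ C) A B := by
  rw [sB, yAtUnit_hom]
  dsimp only [star]
  monoidal

lemma CQBraiding.whiskerRight_whiskerRight_comp_s (cq : CQBraiding Q v) {X A B : C}
    (x : 𝟙_ C ⟶ X) :
    (x ▷ Q.obj A ▷ Q.obj B) ≫ (cq.s X A B).hom =
      (cq.s (𝟙_ C) A B).hom ≫ (x ▷ Q.obj B ▷ Q.obj A) := by
  simpa [starHom, star] using cq.natural x (𝟙 A) (𝟙 B)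

section JointlyEpi

variable (hepi : ∀ {X A Z : C} (f g : X ⊗ A ⟶ Z),
  (∀ x : 𝟙_ C ⟶ X, (x ▷ A) ≫ f = (x ▷ A) ≫ g) → f = g)
include hepi

lemma hom_ext_of_whiskerRight_whiskerRight {X P R Z : C} {f g : (X ⊗ P) ⊗ R ⟶ Z}
    (h : ∀ x : 𝟙_ C ⟶ X, (x ▷ P ▷ R) ≫ f = (x ▷ P ▷ R) ≫ g) : f = g := by
  rw [← cancel_epi (α_ X P R).inv]
  refine hepi _ _ fun x => ?_
  rw [associator_inv_naturality_left_assoc, associator_inv_naturality_left_assoc, h x]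

lemma CQBraiding.s_hom_eq_sB (cq : CQBraiding Q v) (X A B : C) :
    (cq.s X A B).hom = sB Q cq.yAtUnit X A B := by
  refine hom_ext_of_whiskerRight_whiskerRight hepi fun x => ?_
  rw [cq.whiskerRight_whiskerRight_comp_s, cq.s_unit_hom, whiskerRight_whiskerRight_comp_sB]

def CQBraiding.toQBraiding (cq : CQBraiding Q v) : QBraiding Q v where
  y := cq.yAtUnit
  natural {A A' B B'} g h := by
    have h := cq.natural (𝟙 (𝟙_ C)) g h
    simp only [cq.s_hom_eq_sB hepi, starHom_comp_sB, sB_comp_starHom, id_whiskerRight,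
      Category.id_comp] at h
    exact tensorUnit_whiskerLeft_injective ((cancel_mono _).1 ((cancel_epi _).1 h))
  yb A B D := by
    have h := cq.S2 (𝟙_ C) A B D
    simp only [cq.s_hom_eq_sB hepi] at h
    rw [S2_lhs_sB, S2_rhs_sB] at h
    exact tensorUnit_whiskerLeft_injective ((cancel_mono _).1 ((cancel_epi _).1 h)).symm
  hex_a A B D := by
    have h := cq.S3a (𝟙_ C) A B D
    simp only [cq.s_hom_eq_sB hepi] at h
    rw [S3a_lhs_sB, S3a_rhs_sB] at h
    exact tensorUnit_whiskerLeft_injective ((cancel_mono _).1 ((cancel_epi _).1 h))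
  hex_b A B D := by
    have h := cq.S3b (𝟙_ C) A B D
    simp only [cq.s_hom_eq_sB hepi] at h
    rw [S3b_lhs_sB, S3b_rhs_sB] at h
    exact tensorUnit_whiskerLeft_injective ((cancel_mono _).1 ((cancel_epi _).1 h))
  funny A B D := by
    have h := cq.Sstar (𝟙_ C) A B D
    simp only [cq.s_hom_eq_sB hepi] at h
    rw [Sstar_lhs_sB, Sstar_rhs_sB] at h
    exact tensorUnit_whiskerLeft_injective ((cancel_epi _).1 h)

def qBraidingEquivCQBraiding : QBraiding Q v ≃ CQBraiding Q v where
  toFun := QBraiding.toCQBraiding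
  invFun := CQBraiding.toQBraiding hepi
  left_inv yb := by
    ext A B
    rw [CQBraiding.toQBraiding, CQBraiding.yAtUnit_hom]
    dsimp only [QBraiding.toCQBraiding, sBIso_hom, sB, star]
    monoidal
  right_inv cq := by
    ext X A B
    exact (cq.s_hom_eq_sB hepi X A B).symm

end JointlyEpi

end SkewCowarping

open SkewCowarping in
theorem stmt12_general {C : Type u} [Category.{v} C] [MonoidalCategory C]
    (hepi : ∀ {X A Z : C} (f g : X ⊗ A ⟶ Z),
      (∀ x : 𝟙_ C ⟶ X, (x ▷ A) ≫ f = (x ▷ A) ≫ g) → f = g)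
    (Q : C ⥤ C)
    (v : ∀ X Y : C, Q.obj X ⊗ Q.obj Y ⟶ Q.obj (X ⊗ Q.obj Y)) :
    ∃ E : QBraiding Q v ≃ CQBraiding Q v,
      ∀ (yb : QBraiding Q v) (X A B : C),
        ((E yb).s X A B).hom = sB Q yb.y X A B :=
  ⟨qBraidingEquivCQBraiding @hepi, fun _ _ _ _ => rfl⟩

open SkewCowarping in
/-- Proposition 4.3: if in the monoidal category `C` the maps
`x ⊗ 1 : I ⊗ A ⟶ X ⊗ A` (for `x : I ⟶ X`) are jointly epimorphic, then for any
skew cowarping `Q` on `C` the construction `y ↦ 1 ⊗ y` is a bijection between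
braidings on `Q` and braidings on the cowarped skew monoidal category `C[Q]`. -/
theorem stmt12 {C : Type u} [Category.{v} C] [MonoidalCategory C]
    (hepi : ∀ {X A Z : C} (f g : X ⊗ A ⟶ Z),
      (∀ x : 𝟙_ C ⟶ X, (x ▷ A) ≫ f = (x ▷ A) ≫ g) → f = g)
    (Q : C ⥤ C) (K : C)
    (v : ∀ X Y : C, Q.obj X ⊗ Q.obj Y ⟶ Q.obj (X ⊗ Q.obj Y))
    (v₀ : 𝟙_ C ⟶ Q.obj K) (k : ∀ X : C, K ⊗ Q.obj X ⟶ X)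
    (hv : VNatural Q v) (hk : KNatural Q K k)
    (hax : CowarpAxioms Q K v v₀ k) :
    ∃ E : QBraiding Q v ≃ CQBraiding Q v,
      ∀ (yb : QBraiding Q v) (X A B : C),
        ((E yb).s X A B).hom = sB Q yb.y X A B :=
  stmt12_general hepi Q v
end

section
/- Let G be a monoidal comonad on a monoidal category C with braiding y on G (satisfying the four braided cowarping axioms). Then the square GX⊗GZ →^{y} GZ⊗GX →^{1⊗δ} GZ⊗G²X commutes with GX⊗GZ →^{δ⊗1} G²X⊗GZ →^{y} GZ⊗G²X, and consequently the square with both legs δ⊗δ : GX⊗GZ → G²X⊗G²Z and y on top and bottom commutes: y ∘ (δ⊗δ) = (δ⊗δ) ∘ y as maps GX⊗GZ → G²Z⊗G²X. -/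
open CategoryTheory MonoidalCategory

universe v u

variable (C : Type u) [Category.{v} C] [MonoidalCategory C]

/-- A monoidal comonad on a monoidal category `C`: a comonad `(G, δ, ε)` whose
underlying functor is lax monoidal via `G₂, G₀`, and whose comultiplication and
counit are monoidal natural transformations. -/
structure MonoidalComonad where
  G : C ⥤ C
  δ : ∀ X : C, G.obj X ⟶ G.obj (G.obj X)
  ε : ∀ X : C, G.obj X ⟶ X
  δ_natural : ∀ {X Y : C} (f : X ⟶ Y), G.map f ≫ δ Y = δ X ≫ G.map (G.map f)
  ε_natural : ∀ {X Y : C} (f : X ⟶ Y), G.map f ≫ ε Y = ε X ≫ f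
  coassoc : ∀ X : C, δ X ≫ δ (G.obj X) = δ X ≫ G.map (δ X)
  counit_left : ∀ X : C, δ X ≫ ε (G.obj X) = 𝟙 (G.obj X)
  counit_right : ∀ X : C, δ X ≫ G.map (ε X) = 𝟙 (G.obj X)
  G₂ : ∀ X Y : C, G.obj X ⊗ G.obj Y ⟶ G.obj (X ⊗ Y)
  G₀ : 𝟙_ C ⟶ G.obj (𝟙_ C)
  G₂_natural : ∀ {X X' Y Y' : C} (f : X ⟶ X') (g : Y ⟶ Y'),
      (G.map f ⊗ₘ G.map g) ≫ G₂ X' Y' = G₂ X Y ≫ G.map (f ⊗ₘ g)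
  lax_assoc : ∀ X Y Z : C,
      (G₂ X Y ▷ G.obj Z) ≫ G₂ (X ⊗ Y) Z ≫ G.map (α_ X Y Z).hom =
        (α_ (G.obj X) (G.obj Y) (G.obj Z)).hom ≫ (G.obj X ◁ G₂ Y Z) ≫
          G₂ X (Y ⊗ Z)
  lax_left_unit : ∀ X : C,
      (G₀ ▷ G.obj X) ≫ G₂ (𝟙_ C) X ≫ G.map (λ_ X).hom = (λ_ (G.obj X)).hom
  lax_right_unit : ∀ X : C,
      (G.obj X ◁ G₀) ≫ G₂ X (𝟙_ C) ≫ G.map (ρ_ X).hom = (ρ_ (G.obj X)).hom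
  δ_monoidal : ∀ X Y : C,
      G₂ X Y ≫ δ (X ⊗ Y) =
        (δ X ⊗ₘ δ Y) ≫ G₂ (G.obj X) (G.obj Y) ≫ G.map (G₂ X Y)
  δ_monoidal_unit : G₀ ≫ δ (𝟙_ C) = G₀ ≫ G.map G₀
  ε_monoidal : ∀ X Y : C, G₂ X Y ≫ ε (X ⊗ Y) = (ε X ⊗ₘ ε Y)
  ε_monoidal_unit : G₀ ≫ ε (𝟙_ C) = 𝟙 (𝟙_ C)

namespace MonoidalComonad

variable {C} (M : MonoidalComonad C)

/-- The cowarping map `v = G₂ ∘ (1 ⊗ δ) : GX ⊗ GY ⟶ G(X ⊗ GY)` induced by a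
monoidal comonad. -/
def v (X Y : C) : M.G.obj X ⊗ M.G.obj Y ⟶ M.G.obj (X ⊗ M.G.obj Y) :=
  (M.G.obj X ◁ M.δ Y) ≫ M.G₂ X (M.G.obj Y)

/-- A braiding on the monoidal comonad `M`, i.e. a braiding on the associated
skew cowarping: a natural isomorphism `y : GX⊗GY ≅ GY⊗GX` satisfying
equations (1), (1a), (1b) and (funny). -/
structure Braiding where
  y : ∀ X Y : C, M.G.obj X ⊗ M.G.obj Y ≅ M.G.obj Y ⊗ M.G.obj X
  natural : ∀ {X X' Y Y' : C} (f : X ⟶ X') (g : Y ⟶ Y'),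
      (M.G.map f ⊗ₘ M.G.map g) ≫ (y X' Y').hom =
        (y X Y).hom ≫ (M.G.map g ⊗ₘ M.G.map f)
  yang_baxter : ∀ X Y Z : C,
      ((y X Y).hom ▷ M.G.obj Z) ≫ (α_ _ _ _).hom ≫ (M.G.obj Y ◁ (y X Z).hom) ≫
          (α_ _ _ _).inv ≫ ((y Y Z).hom ▷ M.G.obj X) =
        (α_ _ _ _).hom ≫ (M.G.obj X ◁ (y Y Z).hom) ≫ (α_ _ _ _).inv ≫
          ((y X Z).hom ▷ M.G.obj Y) ≫ (α_ _ _ _).hom ≫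
            (M.G.obj Z ◁ (y X Y).hom) ≫ (α_ _ _ _).inv
  hex_a : ∀ X Y Z : C,
      ((y X Y).hom ▷ M.G.obj Z) ≫ (α_ _ _ _).hom ≫ (M.G.obj Y ◁ (y X Z).hom) ≫
          (α_ _ _ _).inv ≫ (M.v Y Z ▷ M.G.obj X) =
        (α_ _ _ _).hom ≫ (M.G.obj X ◁ M.v Y Z) ≫ (y X (Y ⊗ M.G.obj Z)).hom
  hex_b : ∀ X Y Z : C,
      (α_ _ _ _).hom ≫ (M.G.obj X ◁ (y Y Z).hom) ≫ (α_ _ _ _).inv ≫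
          ((y X Z).hom ▷ M.G.obj Y) ≫ (α_ _ _ _).hom ≫ (M.G.obj Z ◁ M.v X Y) =
        (M.v X Y ▷ M.G.obj Z) ≫ (y (X ⊗ M.G.obj Y) Z).hom
  funny : ∀ X Y Z : C,
      (M.v X Y ▷ M.G.obj Z) ≫ M.v (X ⊗ M.G.obj Y) Z ≫
          M.G.map ((α_ X (M.G.obj Y) (M.G.obj Z)).hom ≫ (X ◁ (y Y Z).hom) ≫
            (α_ X (M.G.obj Z) (M.G.obj Y)).inv) =
        (α_ _ _ _).hom ≫ (M.G.obj X ◁ (y Y Z).hom) ≫ (α_ _ _ _).inv ≫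
          (M.v X Z ▷ M.G.obj Y) ≫ M.v (X ⊗ M.G.obj Z) Y

/-- A `G`-coalgebra for the comonad underlying `M`. -/
structure Coalg where
  A : C
  str : A ⟶ M.G.obj A
  counit : str ≫ M.ε A = 𝟙 A
  coassoc : str ≫ M.δ A = str ≫ M.G.map str

/-- A morphism `f : M.A ⟶ N.A` in `C` is a coalgebra morphism. -/
def IsCoalgHom (P Q : M.Coalg) (f : P.A ⟶ Q.A) : Prop :=
  P.str ≫ M.G.map f = f ≫ Q.str

/-- The structure map of the tensor product of two coalgebras
(for the lifted monoidal structure on `C^G`). -/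
def tensorStr (P Q : M.Coalg) : P.A ⊗ Q.A ⟶ M.G.obj (P.A ⊗ Q.A) :=
  (P.str ⊗ₘ Q.str) ≫ M.G₂ P.A Q.A

/-- The cofree coalgebra on an object `X`. -/
def cofree (X : C) : M.Coalg :=
  { A := M.G.obj X
    str := M.δ X
    counit := M.counit_left X
    coassoc := M.coassoc X }

end MonoidalComonad

/-!
Precomposing the hexagon `hex_b` at `X = 𝟙` with `G₀ ⊗ 1 ⊗ 1` turns `v(𝟙, Y)` into `δ_Y` up to
unitors, and turns `y(𝟙, Z) ∘ (G₀ ⊗ 1)` into `1 ⊗ G₀`. The latter unit law for `y` is itself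
extracted from `hex_b`, with `v` traded for `G₂` through `G(1 ⊗ ε)`, and the lax unit laws of `G₂`.
What survives of the hexagon is the square `(1 ⊗ δ) ∘ y = y ∘ (δ ⊗ 1)`. The mirror argument with
`hex_a` at `Y = 𝟙` gives `(δ ⊗ 1) ∘ y = y ∘ (1 ⊗ δ)`, and pasting the two squares gives the
`δ ⊗ δ` square.
-/

namespace MonoidalComonad

variable {C : Type u} [Category.{v} C] [MonoidalCategory C] {M : MonoidalComonad C}

theorem v_comp_map_whiskerLeft_ε (X Y : C) : M.v X Y ≫ M.G.map (X ◁ M.ε Y) = M.G₂ X Y := by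
  have h := M.G₂_natural (𝟙 X) (M.ε Y)
  rw [M.G.map_id, id_tensorHom, id_tensorHom] at h
  rw [v, Category.assoc, ← h, ← whiskerLeft_comp_assoc, M.counit_right, whiskerLeft_id,
    Category.id_comp]

theorem G₀_whiskerRight_comp_G₂ (X : C) :
    (M.G₀ ▷ M.G.obj X) ≫ M.G₂ (𝟙_ C) X = (λ_ (M.G.obj X)).hom ≫ M.G.map (λ_ X).inv := by
  rw [← cancel_mono (M.G.map (λ_ X).hom), Category.assoc, Category.assoc, ← M.G.map_comp,
    Iso.inv_hom_id, M.G.map_id, Category.comp_id, M.lax_left_unit]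

theorem whiskerLeft_G₀_comp_G₂ (X : C) :
    (M.G.obj X ◁ M.G₀) ≫ M.G₂ X (𝟙_ C) = (ρ_ (M.G.obj X)).hom ≫ M.G.map (ρ_ X).inv := by
  rw [← cancel_mono (M.G.map (ρ_ X).hom), Category.assoc, Category.assoc, ← M.G.map_comp,
    Iso.inv_hom_id, M.G.map_id, Category.comp_id, M.lax_right_unit]

theorem G₀_whiskerRight_comp_v (Y : C) :
    (M.G₀ ▷ M.G.obj Y) ≫ M.v (𝟙_ C) Y =
      (λ_ (M.G.obj Y)).hom ≫ M.δ Y ≫ M.G.map (λ_ (M.G.obj Y)).inv := by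
  rw [v, ← whisker_exchange_assoc, G₀_whiskerRight_comp_G₂, leftUnitor_naturality_assoc]

namespace Braiding

variable (b : M.Braiding)

theorem naturality_left {X X' : C} (f : X ⟶ X') (Z : C) :
    (M.G.map f ▷ M.G.obj Z) ≫ (b.y X' Z).hom = (b.y X Z).hom ≫ (M.G.obj Z ◁ M.G.map f) := by
  simpa using b.natural f (𝟙 Z)

theorem naturality_right {Z Z' : C} (g : Z ⟶ Z') (X : C) :
    (M.G.obj X ◁ M.G.map g) ≫ (b.y X Z').hom = (b.y X Z).hom ≫ (M.G.map g ▷ M.G.obj X) := by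
  simpa using b.natural (𝟙 X) g

-- Postcomposing with `G(1 ⊗ ε)` turns `v` into `G₂`.
theorem hex_b_G₂ (X Y Z : C) :
    (α_ _ _ _).hom ≫ (M.G.obj X ◁ (b.y Y Z).hom) ≫ (α_ _ _ _).inv ≫
        ((b.y X Z).hom ▷ M.G.obj Y) ≫ (α_ _ _ _).hom ≫ (M.G.obj Z ◁ M.G₂ X Y) =
      (M.G₂ X Y ▷ M.G.obj Z) ≫ (b.y (X ⊗ Y) Z).hom := by
  have h := b.hex_b X Y Z =≫ (M.G.obj Z ◁ M.G.map (X ◁ M.ε Y))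
  simp only [Category.assoc] at h
  rwa [← whiskerLeft_comp, v_comp_map_whiskerLeft_ε, ← naturality_left,
    ← comp_whiskerRight_assoc, v_comp_map_whiskerLeft_ε] at h

theorem hex_a_G₂ (X Y Z : C) :
    ((b.y X Y).hom ▷ M.G.obj Z) ≫ (α_ _ _ _).hom ≫ (M.G.obj Y ◁ (b.y X Z).hom) ≫
        (α_ _ _ _).inv ≫ (M.G₂ Y Z ▷ M.G.obj X) =
      (α_ _ _ _).hom ≫ (M.G.obj X ◁ M.G₂ Y Z) ≫ (b.y X (Y ⊗ Z)).hom := by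
  have h := b.hex_a X Y Z =≫ (M.G.map (Y ◁ M.ε Z) ▷ M.G.obj X)
  simp only [Category.assoc] at h
  rwa [← comp_whiskerRight, v_comp_map_whiskerLeft_ε, ← naturality_right,
    ← whiskerLeft_comp_assoc, v_comp_map_whiskerLeft_ε] at h

theorem leftUnitor_inv_G₀_hom_whiskerRight_comp_G₂ (Z W : C) :
    (((λ_ (M.G.obj Z)).inv ≫ (M.G₀ ▷ M.G.obj Z) ≫ (b.y (𝟙_ C) Z).hom) ▷ M.G.obj W) ≫
        (α_ _ _ _).hom ≫ (M.G.obj Z ◁ M.G₂ (𝟙_ C) W) =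
      M.G.obj Z ◁ M.G.map (λ_ W).inv := by
  have h := ((M.G₀ ▷ M.G.obj W) ▷ M.G.obj Z) ≫= b.hex_b_G₂ (𝟙_ C) W Z
  rw [← comp_whiskerRight_assoc, G₀_whiskerRight_comp_G₂, comp_whiskerRight, Category.assoc,
    naturality_left, associator_naturality_left_assoc, ← whisker_exchange_assoc,
    associator_inv_naturality_left_assoc] at h
  have coh : (α_ (𝟙_ C) (M.G.obj W) (M.G.obj Z)).hom ≫ (𝟙_ C ◁ (b.y W Z).hom) ≫
      (α_ (𝟙_ C) (M.G.obj Z) (M.G.obj W)).inv =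
      ((λ_ (M.G.obj W)).hom ▷ M.G.obj Z) ≫ (b.y W Z).hom ≫
        ((λ_ (M.G.obj Z)).inv ▷ M.G.obj W) := by monoidal
  rw [reassoc_of% coh, cancel_epi, cancel_epi] at h
  simpa only [comp_whiskerRight, Category.assoc] using h

theorem G₀_whiskerRight_comp_hom (Z : C) :
    (M.G₀ ▷ M.G.obj Z) ≫ (b.y (𝟙_ C) Z).hom =
      (λ_ (M.G.obj Z)).hom ≫ (ρ_ (M.G.obj Z)).inv ≫ (M.G.obj Z ◁ M.G₀) := by
  have h := (M.G.obj Z ◁ M.G₀) ≫= b.leftUnitor_inv_G₀_hom_whiskerRight_comp_G₂ Z (𝟙_ C)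
  rw [whisker_exchange_assoc, associator_naturality_right_assoc, ← whiskerLeft_comp,
    whiskerLeft_G₀_comp_G₂, whiskerLeft_comp, whiskerLeft_rightUnitor, Category.assoc,
    Iso.hom_inv_id_assoc, rightUnitor_naturality_assoc, unitors_inv_equal,
    ← Category.assoc, cancel_mono] at h
  rw [← h, Iso.inv_hom_id_assoc, Iso.hom_inv_id_assoc]

theorem whiskerLeft_rightUnitor_inv_G₀_hom_comp_G₂ (X Y : C) :
    (M.G.obj Y ◁ ((ρ_ (M.G.obj X)).inv ≫ (M.G.obj X ◁ M.G₀) ≫ (b.y X (𝟙_ C)).hom)) ≫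
        (α_ _ _ _).inv ≫ (M.G₂ Y (𝟙_ C) ▷ M.G.obj X) =
      M.G.map (ρ_ Y).inv ▷ M.G.obj X := by
  have h := ((M.G.obj X ⊗ M.G.obj Y) ◁ M.G₀) ≫= b.hex_a_G₂ X Y (𝟙_ C)
  rw [associator_naturality_right_assoc, ← whiskerLeft_comp_assoc, whiskerLeft_G₀_comp_G₂,
    whiskerLeft_comp, Category.assoc, naturality_right, whisker_exchange_assoc,
    associator_naturality_right_assoc] at h
  have coh : ((b.y X Y).hom ▷ 𝟙_ C) ≫ (α_ (M.G.obj Y) (M.G.obj X) (𝟙_ C)).hom =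
      (α_ (M.G.obj X) (M.G.obj Y) (𝟙_ C)).hom ≫ (M.G.obj X ◁ (ρ_ (M.G.obj Y)).hom) ≫
        (b.y X Y).hom ≫ (M.G.obj Y ◁ (ρ_ (M.G.obj X)).inv) := by monoidal
  rw [reassoc_of% coh, cancel_epi, cancel_epi, cancel_epi] at h
  simpa only [whiskerLeft_comp, Category.assoc] using h

theorem whiskerLeft_G₀_comp_hom (X : C) :
    (M.G.obj X ◁ M.G₀) ≫ (b.y X (𝟙_ C)).hom =
      (ρ_ (M.G.obj X)).hom ≫ (λ_ (M.G.obj X)).inv ≫ (M.G₀ ▷ M.G.obj X) := by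
  have h := (M.G₀ ▷ M.G.obj X) ≫= b.whiskerLeft_rightUnitor_inv_G₀_hom_comp_G₂ X (𝟙_ C)
  rw [← whisker_exchange_assoc, associator_inv_naturality_left_assoc, ← comp_whiskerRight,
    G₀_whiskerRight_comp_G₂, comp_whiskerRight, leftUnitor_whiskerRight, Category.assoc,
    Iso.inv_hom_id_assoc, leftUnitor_naturality_assoc, unitors_inv_equal, ← Category.assoc,
    cancel_mono] at h
  rw [← h, Iso.inv_hom_id_assoc, Iso.hom_inv_id_assoc]

theorem hom_comp_whiskerLeft_δ (Y Z : C) :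
    (b.y Y Z).hom ≫ (M.G.obj Z ◁ M.δ Y) = (M.δ Y ▷ M.G.obj Z) ≫ (b.y (M.G.obj Y) Z).hom := by
  have h := ((M.G₀ ▷ M.G.obj Y) ▷ M.G.obj Z) ≫= b.hex_b (𝟙_ C) Y Z
  rw [← comp_whiskerRight_assoc, G₀_whiskerRight_comp_v, comp_whiskerRight, comp_whiskerRight,
    Category.assoc, Category.assoc, naturality_left, associator_naturality_left_assoc,
    ← whisker_exchange_assoc, associator_inv_naturality_left_assoc, ← comp_whiskerRight_assoc,
    G₀_whiskerRight_comp_hom, comp_whiskerRight, comp_whiskerRight, Category.assoc,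
    Category.assoc, associator_naturality_middle_assoc, ← whiskerLeft_comp,
    G₀_whiskerRight_comp_v, whiskerLeft_comp, whiskerLeft_comp] at h
  have coh : (α_ (𝟙_ C) (M.G.obj Y) (M.G.obj Z)).hom ≫ (𝟙_ C ◁ (b.y Y Z).hom) ≫
      (α_ (𝟙_ C) (M.G.obj Z) (M.G.obj Y)).inv ≫ ((λ_ (M.G.obj Z)).hom ▷ M.G.obj Y) ≫
        ((ρ_ (M.G.obj Z)).inv ▷ M.G.obj Y) ≫ (α_ (M.G.obj Z) (𝟙_ C) (M.G.obj Y)).hom ≫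
          (M.G.obj Z ◁ (λ_ (M.G.obj Y)).hom) =
      ((λ_ (M.G.obj Y)).hom ▷ M.G.obj Z) ≫ (b.y Y Z).hom := by monoidal
  rw [reassoc_of% coh, cancel_epi] at h
  simp only [← Category.assoc, cancel_mono] at h
  simpa only [Category.assoc] using h

theorem hom_comp_δ_whiskerRight (X Z : C) :
    (b.y X Z).hom ≫ (M.δ Z ▷ M.G.obj X) = (M.G.obj X ◁ M.δ Z) ≫ (b.y X (M.G.obj Z)).hom := by
  have h := ((M.G.obj X ◁ M.G₀) ▷ M.G.obj Z) ≫= b.hex_a X (𝟙_ C) Z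
  rw [← comp_whiskerRight_assoc, whiskerLeft_G₀_comp_hom, comp_whiskerRight, comp_whiskerRight,
    Category.assoc, Category.assoc, associator_naturality_left_assoc, ← whisker_exchange_assoc,
    associator_inv_naturality_left_assoc, ← comp_whiskerRight, G₀_whiskerRight_comp_v,
    comp_whiskerRight, comp_whiskerRight, associator_naturality_middle_assoc,
    ← whiskerLeft_comp_assoc, G₀_whiskerRight_comp_v, whiskerLeft_comp, whiskerLeft_comp,
    Category.assoc, Category.assoc, naturality_right] at h
  have coh₁ : ((λ_ (M.G.obj X)).inv ▷ M.G.obj Z) ≫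
      (α_ (𝟙_ C) (M.G.obj X) (M.G.obj Z)).hom ≫ (𝟙_ C ◁ (b.y X Z).hom) ≫
        (α_ (𝟙_ C) (M.G.obj Z) (M.G.obj X)).inv ≫ ((λ_ (M.G.obj Z)).hom ▷ M.G.obj X) =
      (b.y X Z).hom := by monoidal
  have coh₂ : (α_ (M.G.obj X) (𝟙_ C) (M.G.obj Z)).hom ≫ (M.G.obj X ◁ (λ_ (M.G.obj Z)).hom) =
      (ρ_ (M.G.obj X)).hom ▷ M.G.obj Z := by monoidal
  rw [reassoc_of% coh₁, reassoc_of% coh₂, cancel_epi] at h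
  simp only [← Category.assoc, cancel_mono] at h
  simpa only [Category.assoc] using h

theorem tensorHom_δ_comp_hom (X Z : C) :
    (M.δ X ⊗ₘ M.δ Z) ≫ (b.y (M.G.obj X) (M.G.obj Z)).hom = (b.y X Z).hom ≫ (M.δ Z ⊗ₘ M.δ X) := by
  rw [tensorHom_def_assoc, ← hom_comp_δ_whiskerRight, ← reassoc_of% hom_comp_whiskerLeft_δ,
    tensorHom_def']

end Braiding

end MonoidalComonad

/-- if `y` is a braiding on the monoidal comonad `G`, then
`(1 ⊗ δ) ∘ y = y ∘ (δ ⊗ 1)` as maps `GX ⊗ GZ ⟶ GZ ⊗ G²X`, and consequently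
`y ∘ (δ ⊗ δ) = (δ ⊗ δ) ∘ y` as maps `GX ⊗ GZ ⟶ G²Z ⊗ G²X`. -/
theorem stmt15 {C : Type u} [Category.{v} C] [MonoidalCategory C]
    (M : MonoidalComonad C) (b : M.Braiding) :
    (∀ X Z : C,
      (b.y X Z).hom ≫ (M.G.obj Z ◁ M.δ X) =
        (M.δ X ▷ M.G.obj Z) ≫ (b.y (M.G.obj X) Z).hom) ∧
    (∀ X Z : C,
      (M.δ X ⊗ₘ M.δ Z) ≫ (b.y (M.G.obj X) (M.G.obj Z)).hom =
        (b.y X Z).hom ≫ (M.δ Z ⊗ₘ M.δ X)) :=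
  ⟨b.hom_comp_whiskerLeft_δ, b.tensorHom_δ_comp_hom⟩
end
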